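/- arXiv:0808.2657 — 6 statements merged into one kernel-verified Lean document; each statement's English description precedes it below -/
import Mathlib

section
/- Let $M$ be a finitely generated $\mathbb{Z}^n$-graded module over $S=K[x_1,\ldots,x_n]$. Then $\operatorname{sdepth}(M)=n$ if and only if $M$ is a free $S$-module. -/
open MvPolynomial

/-- A `ℤⁿ`-multigrading (by `K`-subspaces) on a module `M` over the polynomial
ring `S = K[x₁,…,xₙ]`: a direct sum decomposition of `M` into `K`-subspaces indexed
by `ℤⁿ`, such that multiplication by a monomial of exponent `c` maps the component
of degree `a` into the component of degree `a + c`. -/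
structure MultiGrading (K : Type*) [Field K] (n : ℕ) (M : Type*) [AddCommGroup M]
    [Module K M] [Module (MvPolynomial (Fin n) K) M]
    [IsScalarTower K (MvPolynomial (Fin n) K) M] where
  deg : (Fin n → ℤ) → Submodule K M
  isInternal : DirectSum.IsInternal deg
  monomial_smul_mem : ∀ (c : Fin n →₀ ℕ) (a : Fin n → ℤ) (m : M),
    m ∈ deg a → (monomial c (1 : K)) • m ∈ deg (a + fun i => (c i : ℤ))

variable {K : Type*} [Field K] {n : ℕ} {M : Type*} [AddCommGroup M]
  [Module K M] [Module (MvPolynomial (Fin n) K) M]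
  [IsScalarTower K (MvPolynomial (Fin n) K) M]

/-- The `K`-subspace `m·K[Z]` of `M`, for `m : M` and a set of variables `Z`:
the image of the polynomials supported on `Z` under `p ↦ p • m`. -/
noncomputable def stanleySpace (m : M) (Z : Finset (Fin n)) : Submodule K M :=
  Submodule.map ((LinearMap.toSpanSingleton (MvPolynomial (Fin n) K) M m).restrictScalars K)
    (Subalgebra.toSubmodule (MvPolynomial.supported K (↑Z : Set (Fin n))))

/-- A Stanley decomposition of a multigraded module `M`: a finite family of
homogeneous elements `mᵢ` and sets of variables `Zᵢ` such that each `mᵢ·K[Zᵢ]` is a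
free `K[Zᵢ]`-module and `M = ⊕ᵢ mᵢ·K[Zᵢ]` as a `K`-vector space. -/
structure StanleyDecomposition (g : MultiGrading K n M) where
  r : ℕ
  elt : Fin r → M
  Z : Fin r → Finset (Fin n)
  homogeneous : ∀ i, ∃ a, elt i ∈ g.deg a
  free : ∀ i, ∀ p ∈ MvPolynomial.supported K (↑(Z i) : Set (Fin n)), p • elt i = 0 → p = 0
  isInternal : DirectSum.IsInternal fun i => stanleySpace (K := K) (elt i) (Z i)

/-- The Stanley depth of a Stanley decomposition: the minimum of the `|Zᵢ|`. -/
noncomputable def StanleyDecomposition.sdepth {g : MultiGrading K n M}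
    (D : StanleyDecomposition g) : ℕ∞ :=
  ⨅ i, ((D.Z i).card : ℕ∞)

/-- The Stanley depth of a multigraded module: the supremum of the Stanley depths
of its Stanley decompositions. -/
noncomputable def stanleyDepth (g : MultiGrading K n M) : ℕ∞ :=
  ⨆ D : StanleyDecomposition g, D.sdepth

/-!
If `sdepth M = n`, some Stanley decomposition has every `Zᵢ` equal to the full set of variables,
so `M = ⊕ᵢ S·mᵢ` with each `mᵢ` torsion-free: the `mᵢ` form a basis.

Conversely, a finitely generated projective graded module has a homogeneous basis. Take a minimal
homogeneous generating set `m₁, …, m_r`. Projecting a relation `∑ vᵢ mᵢ = 0` onto the degree of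
`mⱼ` shows that `vⱼ(0) ≠ 0` would make `mⱼ` redundant, so the kernel of `S^r → M` lies in `𝔪 S^r`.
Being a direct summand, the kernel then equals `𝔪` times itself, and Nakayama kills it. The basis
is a Stanley decomposition with all `Zᵢ` full.
-/

open Submodule DirectSum

section SpanSingleton

variable {R N ι : Type*} [Ring R] [AddCommGroup N] [Module R N] [DecidableEq ι]

theorem Module.Basis.isInternal_span_singleton (b : Module.Basis ι R N) :
    IsInternal fun i => R ∙ b i :=
  isInternal_submodule_of_iSupIndep_of_iSup_eq_top b.linearIndependent.iSupIndep_span_singleton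
    (by rw [← span_range_eq_iSup, b.span_eq])

theorem DirectSum.IsInternal.linearIndependent_of_span_singleton {v : ι → N}
    (h : IsInternal fun i => R ∙ v i) (hv : ∀ i, Ideal.torsionOf R N (v i) = ⊥) :
    LinearIndependent R v :=
  Ideal.iSupIndep.linearIndependent' h.submodule_iSupIndep hv

theorem DirectSum.IsInternal.span_range_eq_top_of_span_singleton {v : ι → N}
    (h : IsInternal fun i => R ∙ v i) : span R (Set.range v) = ⊤ := by
  rw [span_range_eq_iSup]
  exact h.submodule_iSup_eq_top

end SpanSingleton

theorem LinearMap.ker_eq_bot_of_ker_le_smul_top {R F P : Type*} [CommRing R] [IsDomain R]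
    [AddCommGroup F] [Module R F] [Module.Finite R F] [Module.IsTorsionFree R F]
    [AddCommGroup P] [Module R P] [Module.Projective R P] {I : Ideal R} (hI : I ≠ ⊤)
    (ψ : F →ₗ[R] P) (hψ : Function.Surjective ψ) (hker : ker ψ ≤ I • ⊤) : ker ψ = ⊥ := by
  -- A section `σ` of `ψ` exhibits `ker ψ` as the range of the projection `id - σ ψ`, so
  -- `ker ψ ≤ I • ker ψ`; Nakayama gives `c ≡ 1 mod I` killing `ker ψ`, and `c ≠ 0` as `I ≠ ⊤`.
  obtain ⟨σ, hσ⟩ := Module.projective_lifting_property ψ LinearMap.id hψ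
  set π := LinearMap.id - σ ∘ₗ ψ
  have hπ : range π ≤ ker ψ := by
    rintro - ⟨f, rfl⟩
    simp [π, ← LinearMap.comp_apply ψ σ, hσ]
  have hker_le : ker ψ ≤ I • ker ψ := by
    intro f hf
    have hπf : π f = f := by simp [π, mem_ker.1 hf]
    have hmap : (I • ⊤ : Submodule R F).map π ≤ I • ker ψ := by
      rw [map_smul'', Submodule.map_top]
      exact smul_mono_right I hπ
    exact hπf ▸ hmap (mem_map_of_mem (hker hf))
  have := Module.Finite.of_surjective ψ hψ
  have := Module.finitePresentation_of_projective R P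
  obtain ⟨c, hc1, hc⟩ := exists_sub_one_mem_and_smul_eq_zero_of_fg_of_le_smul I _
    (Module.FinitePresentation.fg_ker ψ hψ) hker_le
  have hc0 : c ≠ 0 := by
    rintro rfl
    exact hI (I.eq_top_of_isUnit_mem (by simpa using I.neg_mem hc1) isUnit_one)
  exact eq_bot_iff.2 fun f hf => (smul_eq_zero.1 (hc f hf)).resolve_left hc0

theorem MvPolynomial.moduleFree_of_isEmpty {σ : Type*} [IsEmpty σ] (N : Type*) [AddCommGroup N]
    [Module (MvPolynomial σ K) N] : Module.Free (MvPolynomial σ K) N := by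
  let := (MulEquiv.isField (Field.toIsField K) (isEmptyAlgEquiv K σ).toMulEquiv).toField
  exact Module.Free.of_divisionRing _ N

local notation "S" => MvPolynomial (Fin n) K

theorem stanleySpace_univ (m : M) :
    stanleySpace m (Finset.univ : Finset (Fin n)) = (S ∙ m).restrictScalars K := by
  ext x
  simp [stanleySpace, supported_univ, mem_span_singleton]

namespace MultiGrading

variable (g : MultiGrading K n M)

theorem monomial_smul_mem_of_mem {m : M} {b : Fin n → ℤ} (hm : m ∈ g.deg b) (c : Fin n →₀ ℕ)
    (k : K) : monomial c k • m ∈ g.deg (b + fun i => (c i : ℤ)) := by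
  rw [← mul_one k, ← smul_eq_mul, ← smul_monomial, smul_assoc]
  exact (g.deg _).smul_mem k (g.monomial_smul_mem c b m hm)

def IsHomogeneousGeneratingSet (T : Finset M) : Prop :=
  (∀ x ∈ T, ∃ a, x ∈ g.deg a) ∧ span S (T : Set M) = ⊤

section Decomposition

variable [Decomposition g.deg]

theorem decompose_smul_mem_span {m : M} {b : Fin n → ℤ} (hm : m ∈ g.deg b) (p : S)
    (a : Fin n → ℤ) : (decompose g.deg (p • m) a : M) ∈ S ∙ m := by
  induction p using MvPolynomial.induction_on' with
  | monomial c k =>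
    by_cases h : (b + fun i => (c i : ℤ)) = a
    · rw [decompose_of_mem_same _ (h ▸ g.monomial_smul_mem_of_mem hm c k)]
      exact smul_mem _ _ (mem_span_singleton_self m)
    · rw [decompose_of_mem_ne _ (g.monomial_smul_mem_of_mem hm c k) h]
      exact zero_mem _
  | add p q hp hq =>
    rw [add_smul, decompose_add, DirectSum.add_apply, Submodule.coe_add]
    exact add_mem hp hq

theorem decompose_smul_of_mem {m : M} {b : Fin n → ℤ} (hm : m ∈ g.deg b) (p : S) :
    (decompose g.deg (p • m) b : M) = constantCoeff p • m := by
  induction p using MvPolynomial.induction_on' with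
  | monomial c k =>
    rw [constantCoeff_monomial]
    split_ifs with hc
    · subst hc
      rw [monomial_zero', ← algebraMap_eq, algebraMap_smul,
        decompose_of_mem_same _ ((g.deg b).smul_mem k hm)]
    · refine (decompose_of_mem_ne _ (g.monomial_smul_mem_of_mem hm c k) fun h => hc ?_).trans
        (zero_smul K m).symm
      ext i
      simpa using congr_fun h i
  | add p q hp hq =>
    rw [add_smul, decompose_add, DirectSum.add_apply, Submodule.coe_add, hp, hq, map_add, add_smul]

theorem constantCoeff_smul_mem_span_of_sum_eq_zero {ι : Type*} [Fintype ι] [DecidableEq ι]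
    {m : ι → M} {a : ι → Fin n → ℤ} (hm : ∀ i, m i ∈ g.deg (a i)) {v : ι → S}
    (hv : ∑ i, v i • m i = 0) (j : ι) :
    constantCoeff (v j) • m j ∈ span S (m '' {i | i ≠ j}) := by
  rw [← Finset.add_sum_erase _ _ (Finset.mem_univ j)] at hv
  have hj := congr_arg (fun x => (decompose g.deg x (a j) : M)) hv
  simp only [decompose_add, DirectSum.add_apply, Submodule.coe_add, decompose_sum,
    DirectSum.sum_apply, AddSubmonoidClass.coe_finsetSum, decompose_zero,
    DirectSum.zero_apply, ZeroMemClass.coe_zero, g.decompose_smul_of_mem (hm j)] at hj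
  rw [eq_neg_of_add_eq_zero_left hj]
  refine neg_mem (sum_mem fun i hi => span_mono ?_ (g.decompose_smul_mem_span (hm i) _ _))
  exact Set.singleton_subset_iff.2 ⟨i, Finset.ne_of_mem_erase hi, rfl⟩

theorem exists_isHomogeneousGeneratingSet [Module.Finite S M] :
    ∃ T, g.IsHomogeneousGeneratingSet T := by
  classical
  obtain ⟨s, hs⟩ := Module.Finite.fg_top (R := S) (M := M)
  refine ⟨s.biUnion fun x => (decompose g.deg x).support.image fun a => (decompose g.deg x a : M),
    ?_, ?_⟩
  · simp only [Finset.mem_biUnion, Finset.mem_image]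
    rintro - ⟨x, -, a, -, rfl⟩
    exact ⟨a, SetLike.coe_mem _⟩
  · rw [eq_top_iff, ← hs, span_le]
    intro x hx
    rw [← sum_support_decompose g.deg x]
    exact sum_mem fun a ha =>
      subset_span (Finset.mem_biUnion.2 ⟨x, hx, Finset.mem_image_of_mem _ ha⟩)

theorem constantCoeff_eq_zero_of_minimal {T : Finset M}
    (hT : Minimal g.IsHomogeneousGeneratingSet T) {v : T → S} (hv : ∑ i, v i • (i : M) = 0)
    (j : T) : constantCoeff (v j) = 0 := by
  classical
  by_contra hc
  choose a ha using fun i : T => hT.prop.1 i i.2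
  have hj : (j : M) ∈ span S (T.erase j : Set M) := by
    have himage : ((↑) : T → M) '' {i | i ≠ j} = T.erase j := by aesop
    rw [← himage, ← inv_smul_smul₀ hc (j : M)]
    exact smul_of_tower_mem _ _ (g.constantCoeff_smul_mem_span_of_sum_eq_zero ha hv j)
  have hspan : span S (T.erase j : Set M) = ⊤ := by
    rw [eq_top_iff, ← hT.prop.2, span_le]
    intro x hx
    by_cases hxj : x = j
    · exact hxj ▸ hj
    · exact subset_span (Finset.mem_erase.2 ⟨hxj, hx⟩)
  have := hT.2 ⟨fun x hx => hT.prop.1 x (Finset.mem_of_mem_erase hx), hspan⟩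
    (Finset.erase_subset _ _) j.2
  simp at this

end Decomposition

theorem exists_basis_homogeneous [Module.Finite S M] [Module.Projective S M] :
    ∃ (r : ℕ) (b : Module.Basis (Fin r) S M), ∀ i, ∃ a, b i ∈ g.deg a := by
  classical
  let := g.isInternal.chooseDecomposition
  obtain ⟨T, hT⟩ := exists_minimal_of_wellFoundedLT _ g.exists_isHomogeneousGeneratingSet
  set ψ := Fintype.linearCombination S ((↑) : T → M)
  have hψ : Function.Surjective ψ := by
    rw [← LinearMap.range_eq_top, Fintype.range_linearCombination, Subtype.range_coe]
    exact hT.prop.2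
  have hker : LinearMap.ker ψ ≤ RingHom.ker (constantCoeff : S →+* K) • ⊤ := fun v hv => by
    rw [pi_eq_sum_univ v]
    refine sum_mem fun i _ => smul_mem_smul (g.constantCoeff_eq_zero_of_minimal hT ?_ i) trivial
    simpa [ψ, Fintype.linearCombination_apply] using hv
  have hli : LinearIndependent S ((↑) : T → M) :=
    linearIndependent_iff_injective_fintypeLinearCombination.2 <| LinearMap.ker_eq_bot.1 <|
      LinearMap.ker_eq_bot_of_ker_le_smul_top (RingHom.ker_ne_top _) ψ hψ hker
  let b := Module.Basis.mk hli (by rw [Subtype.range_coe]; exact hT.prop.2.ge)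
  exact ⟨T.card, b.reindex T.equivFin,
    fun i => by simpa [b] using hT.prop.1 _ (T.equivFin.symm i).2⟩

end MultiGrading

namespace StanleyDecomposition

variable {g : MultiGrading K n M}

noncomputable def ofBasis {r : ℕ} (b : Module.Basis (Fin r) S M) (hb : ∀ i, ∃ a, b i ∈ g.deg a) :
    StanleyDecomposition g where
  r := r
  elt := b
  Z _ := Finset.univ
  homogeneous := hb
  free i _ _ hp := (b.smul_eq_zero.1 hp).resolve_right (b.ne_zero i)
  isInternal := by
    simp_rw [stanleySpace_univ]
    exact b.isInternal_span_singleton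

theorem sdepth_ofBasis [Nontrivial M] {r : ℕ} (b : Module.Basis (Fin r) S M)
    (hb : ∀ i, ∃ a, b i ∈ g.deg a) : (ofBasis b hb).sdepth = n := by
  have := b.index_nonempty
  simp [sdepth, ofBasis]

theorem nonempty_index [Nontrivial M] (D : StanleyDecomposition g) : Nonempty (Fin D.r) := by
  by_contra h
  rw [not_nonempty_iff] at h
  exact not_subsingleton M D.isInternal.surjective.subsingleton

theorem sdepth_le [Nontrivial M] (D : StanleyDecomposition g) : D.sdepth ≤ n := by
  obtain ⟨i⟩ := D.nonempty_index
  exact (iInf_le _ i).trans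
    (by exact_mod_cast (Finset.card_le_univ _).trans_eq (Fintype.card_fin n))

theorem Z_eq_univ_of_le_sdepth (D : StanleyDecomposition g) (h : n ≤ D.sdepth) (i : Fin D.r) :
    D.Z i = Finset.univ := by
  refine Finset.eq_univ_of_card _ (le_antisymm (Finset.card_le_univ _) ?_)
  rw [Fintype.card_fin]
  exact_mod_cast h.trans (iInf_le _ i)

theorem moduleFree_of_le_sdepth (D : StanleyDecomposition g) (h : n ≤ D.sdepth) :
    Module.Free S M := by
  have hZ := D.Z_eq_univ_of_le_sdepth h
  have hint : IsInternal fun i => S ∙ D.elt i := by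
    have := D.isInternal
    simp_rw [hZ, stanleySpace_univ] at this
    exact this
  have htors (i : Fin D.r) : Ideal.torsionOf S M (D.elt i) = ⊥ :=
    eq_bot_iff.2 fun p hp =>
      D.free i p (by simp [hZ, supported_univ]) ((Ideal.mem_torsionOf_iff _ _).1 hp)
  exact .of_basis (.mk (hint.linearIndependent_of_span_singleton htors)
    hint.span_range_eq_top_of_span_singleton.ge)

end StanleyDecomposition

theorem stanleyDepth_le [Nontrivial M] (g : MultiGrading K n M) : stanleyDepth g ≤ n :=
  iSup_le StanleyDecomposition.sdepth_le

/-- Let `M` be a finitely generated `ℤⁿ`-graded module over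
`S = K[x₁,…,xₙ]`. Then `sdepth M = n` if and only if `M` is a free `S`-module. -/
theorem sdepth_eq_n_iff_free [Nontrivial M]
    [Module.Finite (MvPolynomial (Fin n) K) M] (g : MultiGrading K n M) :
    stanleyDepth g = (n : ℕ∞) ↔ Module.Free (MvPolynomial (Fin n) K) M := by
  constructor
  · intro h
    rcases isEmpty_or_nonempty (StanleyDecomposition g) with _ | _
    -- with no Stanley decomposition the supremum is `0`, forcing `n = 0` and `S = K`
    · obtain rfl : n = 0 := by simpa [stanleyDepth] using h.symm
      exact MvPolynomial.moduleFree_of_isEmpty M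
    · obtain ⟨D, hD⟩ := ENat.exists_eq_iSup_of_lt_top (f := StanleyDecomposition.sdepth (g := g))
        (show stanleyDepth g < ⊤ by simp [h])
      exact D.moduleFree_of_le_sdepth (hD.trans h).ge
  · intro _
    obtain ⟨r, b, hb⟩ := g.exists_basis_homogeneous
    refine le_antisymm (stanleyDepth_le g) ?_
    rw [← StanleyDecomposition.sdepth_ofBasis b hb]
    exact le_iSup _ _
end

section
/- Let $M$ be a finitely generated $\mathbb{Z}^n$-graded module over $S=K[x_1,\ldots,x_n]$ such that $\dim_K(M_a)\le 1$ for every multidegree $a\in\mathbb{Z}^n$. If $\operatorname{depth}(M)=0$, then $\operatorname{sdepth}(M)=0$. -/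
/-!
Since `𝔪` is associated to `M`, some nonzero `x` is killed by `𝔪`, and then so is each homogeneous
component of `x`; pick a nonzero one, `y ∈ M_a`. In any Stanley decomposition the elements
`u • mᵢ` (`u` a monomial in `Zᵢ`) span `M` and are homogeneous, so one of them is a nonzero element
of `M_a`. As `dim_K M_a ≤ 1` it is a multiple of `y`, so `x_j u • mᵢ = 0` for all `j`; freeness of
`mᵢ K[Zᵢ]` then forces `Zᵢ = ∅`.
-/

open MvPolynomial

variable {K : Type*} [Field K] {n : ℕ} {M : Type*} [AddCommGroup M]
  [Module K M] [Module (MvPolynomial (Fin n) K) M]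
  [IsScalarTower K (MvPolynomial (Fin n) K) M]

theorem IsAssociatedPrime.exists_ne_zero_forall_smul_eq_zero {R M : Type*} [CommRing R]
    [IsNoetherianRing R] [AddCommGroup M] [Module R M] {I : Ideal R}
    (h : IsAssociatedPrime I M) : ∃ x : M, x ≠ 0 ∧ ∀ r ∈ I, r • x = 0 := by
  obtain ⟨hI, x, rfl⟩ := isAssociatedPrime_iff.mp h
  refine ⟨x, ?_, fun r hr => Submodule.mem_bot R |>.mp (Submodule.mem_colon_singleton.mp hr)⟩
  rintro rfl
  exact hI.ne_top (by simp [Submodule.colon, Ideal.eq_top_iff_one])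

theorem iSupIndep.map_eq_zero_of_map_sum_eq_zero {R ι ι' N N' : Type*} [Ring R]
    [AddCommGroup N] [Module R N] [AddCommGroup N'] [Module R N']
    {p : ι → Submodule R N} {q : ι' → Submodule R N'} (hq : iSupIndep q)
    {σ : ι → ι'} (hσ : σ.Injective) (φ : N →+ N') (hφ : ∀ b, ∀ v ∈ p b, φ v ∈ q (σ b))
    {s : Finset ι} {v : ι → N} (hv : ∀ b ∈ s, v b ∈ p b) (h0 : φ (∑ b ∈ s, v b) = 0) :
    ∀ a ∈ s, φ (v a) = 0 := by
  classical
  rw [map_sum] at h0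
  exact (iSupIndep_iff_finsetSum_eq_zero_imp_eq_zero _).mp (hq.comp hσ) s (fun b => φ (v b))
    (fun b hb => hφ b _ (hv b hb)) h0

theorem iSupIndep.exists_mem_ne_zero_of_mem_span {R ι N : Type*} [Ring R] [AddCommGroup N]
    [Module R N] {p : ι → Submodule R N} (hp : iSupIndep p) {S : Set N}
    (hS : ∀ s ∈ S, ∃ b, s ∈ p b) {a : ι} {y : N} (hya : y ∈ p a) (hy0 : y ≠ 0)
    (hyS : y ∈ Submodule.span R S) : ∃ s ∈ S, s ∈ p a ∧ s ≠ 0 := by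
  by_contra! hS0
  have hS_le : Submodule.span R S ≤ ⨆ b, ⨆ _ : b ≠ a, p b := by
    refine Submodule.span_le.mpr fun s hs => ?_
    obtain ⟨b, hsb⟩ := hS s hs
    by_cases hba : b = a
    · rw [hS0 s hs (hba ▸ hsb)]
      exact zero_mem _
    · exact Submodule.mem_iSup_of_mem b (Submodule.mem_iSup_of_mem hba hsb)
  exact hy0 (Submodule.disjoint_def.mp (hp a) y hya (hS_le hyS))

theorem exists_smul_eq_of_rank_le_one {F V : Type*} [DivisionRing F] [AddCommGroup V]
    [Module F V] (h : Module.rank F V ≤ 1) {y : V} (hy : y ≠ 0) (v : V) :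
    ∃ t : F, t • y = v := by
  obtain ⟨v₀, hv₀⟩ := rank_le_one_iff.mp h
  obtain ⟨r, rfl⟩ := hv₀ y
  obtain ⟨s, rfl⟩ := hv₀ v
  have hr : r ≠ 0 := by rintro rfl; exact hy (zero_smul F v₀)
  exact ⟨s * r⁻¹, by rw [smul_smul, mul_assoc, inv_mul_cancel₀ hr, mul_one]⟩

theorem MvPolynomial.supported_le_restrictSupport {σ R : Type*} [CommSemiring R] (s : Set σ) :
    Subalgebra.toSubmodule (supported R s) ≤ restrictSupport R {c | ↑c.support ⊆ s} :=
  fun _ hp c hc t ht => mem_supported.mp hp ((mem_vars_iff_mem_support t).mpr ⟨c, hc, ht⟩)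

theorem stanleySpace_le_span (m : M) (Z : Finset (Fin n)) :
    stanleySpace (K := K) m Z ≤ Submodule.span K
      {v | ∃ c : Fin n →₀ ℕ, ↑c.support ⊆ (Z : Set (Fin n)) ∧ monomial c (1 : K) • m = v} := by
  refine (Submodule.map_mono (supported_le_restrictSupport _)).trans ?_
  rw [restrictSupport_eq_span, Submodule.map_span, Set.image_image]
  rfl

namespace MultiGrading

variable (g : MultiGrading K n M)

theorem X_smul_mem {a : Fin n → ℤ} {m : M} (hm : m ∈ g.deg a) (j : Fin n) :
    (X j : MvPolynomial (Fin n) K) • m ∈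
      g.deg (a + fun i => ((Finsupp.single j 1 : Fin n →₀ ℕ) i : ℤ)) :=
  g.monomial_smul_mem _ a m hm

theorem exists_mem_deg_ne_zero_forall_X_smul_eq_zero {x : M} (hx0 : x ≠ 0)
    (hxX : ∀ j, (X j : MvPolynomial (Fin n) K) • x = 0) :
    ∃ a, ∃ y ∈ g.deg a, y ≠ 0 ∧ ∀ j, (X j : MvPolynomial (Fin n) K) • y = 0 := by
  obtain ⟨f, hf, rfl⟩ := (Submodule.mem_iSup_iff_exists_finsupp g.deg x).mp
    (g.isInternal.submodule_iSup_eq_top ▸ Submodule.mem_top)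
  obtain ⟨a, ha⟩ : f.support.Nonempty := by
    rw [Finset.nonempty_iff_ne_empty]
    rintro hf0
    exact hx0 (by simp [Finsupp.sum, hf0])
  refine ⟨a, f a, hf a, Finsupp.mem_support_iff.mp ha, fun j => ?_⟩
  exact g.isInternal.submodule_iSupIndep.map_eq_zero_of_map_sum_eq_zero (add_left_injective _)
    (DistribSMul.toAddMonoidHom M (X j)) (fun b v hv => g.X_smul_mem hv j)
    (fun b _ => hf b) (hxX j) a ha

end MultiGrading

namespace StanleyDecomposition

variable {g : MultiGrading K n M} (D : StanleyDecomposition g)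

def monomialMultiples : Set M :=
  {v | ∃ i, ∃ c : Fin n →₀ ℕ,
    ↑c.support ⊆ (D.Z i : Set (Fin n)) ∧ monomial c (1 : K) • D.elt i = v}

theorem span_monomialMultiples : Submodule.span K D.monomialMultiples = ⊤ := by
  refine eq_top_iff.mpr (D.isInternal.submodule_iSup_eq_top.symm.le.trans (iSup_le fun i => ?_))
  refine (stanleySpace_le_span _ _).trans (Submodule.span_mono ?_)
  rintro _ ⟨c, hc, rfl⟩
  exact ⟨i, c, hc, rfl⟩

theorem exists_mem_deg_of_mem_monomialMultiples :
    ∀ v ∈ D.monomialMultiples, ∃ a, v ∈ g.deg a := by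
  rintro _ ⟨i, c, -, rfl⟩
  obtain ⟨a, ha⟩ := D.homogeneous i
  exact ⟨_, g.monomial_smul_mem c a _ ha⟩

theorem Z_eq_empty_of_forall_X_smul_eq_zero {i : Fin D.r} {c : Fin n →₀ ℕ}
    (hc : ↑c.support ⊆ (D.Z i : Set (Fin n)))
    (hX : ∀ j, (X j : MvPolynomial (Fin n) K) • monomial c (1 : K) • D.elt i = 0) :
    D.Z i = ∅ := by
  by_contra hZ
  obtain ⟨j, hj⟩ := Finset.nonempty_iff_ne_empty.mpr hZ
  have hmem : X j * monomial c (1 : K) ∈ supported K (D.Z i : Set (Fin n)) :=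
    mul_mem (X_mem_supported.mpr hj) (mem_supported.mpr (by rwa [vars_monomial one_ne_zero]))
  have hne : X j * monomial c (1 : K) ≠ 0 := by
    rw [X, monomial_mul, one_mul, Ne, monomial_eq_zero]
    exact one_ne_zero
  exact hne (D.free i _ hmem (by rw [mul_smul, hX j]))

theorem sdepth_eq_zero_of_Z_eq_empty {i : Fin D.r} (hZ : D.Z i = ∅) : D.sdepth = 0 :=
  le_antisymm (iInf_le_of_le i (by simp [hZ])) zero_le

end StanleyDecomposition

theorem sdepth_eq_zero_of_depth_eq_zero_general
    (g : MultiGrading K n M)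
    (hdim : ∀ a : Fin n → ℤ, Module.rank K (g.deg a) ≤ 1)
    (h : IsAssociatedPrime (Ideal.span (Set.range (X : Fin n → MvPolynomial (Fin n) K))) M) :
    stanleyDepth g = 0 := by
  obtain ⟨x, hx0, hxX⟩ := h.exists_ne_zero_forall_smul_eq_zero
  obtain ⟨a, y, hya, hy0, hyX⟩ := g.exists_mem_deg_ne_zero_forall_X_smul_eq_zero hx0
    fun j => hxX _ (Ideal.subset_span ⟨j, rfl⟩)
  refine le_antisymm (iSup_le fun D => ?_) zero_le
  obtain ⟨_, ⟨i, c, hc, rfl⟩, hva, -⟩ :=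
    g.isInternal.submodule_iSupIndep.exists_mem_ne_zero_of_mem_span
      D.exists_mem_deg_of_mem_monomialMultiples hya hy0
      (D.span_monomialMultiples ▸ Submodule.mem_top)
  -- `dim_K M_a ≤ 1` makes the degree-`a` piece a multiple of `y`, hence killed by every `x_j`.
  obtain ⟨t, ht⟩ := exists_smul_eq_of_rank_le_one (hdim a)
    (y := ⟨y, hya⟩) (Subtype.coe_ne_coe.mp hy0) ⟨_, hva⟩
  have hv : t • y = monomial c (1 : K) • D.elt i := congrArg Subtype.val ht
  have hZ := D.Z_eq_empty_of_forall_X_smul_eq_zero hc fun j => by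
    rw [← hv, smul_comm, hyX j, smul_zero]
  exact (D.sdepth_eq_zero_of_Z_eq_empty hZ).le

/-- Let `M` be a finitely generated `ℤⁿ`-graded module over
`S = K[x₁,…,xₙ]` with `dim_K M_a ≤ 1` for every multidegree `a`. If `depth M = 0`
(i.e. `𝔪 = (x₁,…,xₙ)` is an associated prime of `M`), then `sdepth M = 0`. -/
theorem sdepth_eq_zero_of_depth_eq_zero
    [Module.Finite (MvPolynomial (Fin n) K) M] (g : MultiGrading K n M)
    (hdim : ∀ a : Fin n → ℤ, Module.rank K (g.deg a) ≤ 1)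
    (h : IsAssociatedPrime (Ideal.span (Set.range (X : Fin n → MvPolynomial (Fin n) K))) M) :
    stanleyDepth g = 0 :=
  sdepth_eq_zero_of_depth_eq_zero_general g hdim h
end

section
/- Let $S=K[x_1,x_2]$ and let $M=(Se_1\oplus Se_2)/(x_1z,\,x_2z)$ where $z=x_1e_2-x_2e_1$, graded by $\deg(e_1)=(1,0)$ and $\deg(e_2)=(0,1)$. Then $\operatorname{depth}(M)=0$ and $\operatorname{sdepth}(M)=1$. (In particular, the hypothesis $\dim_K(M_a)\le 1$ cannot be omitted from the statement that $\operatorname{depth}(M)=0$ implies $\operatorname{sdepth}(M)=0$.) -/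
/-!
The class `z̄` of `z` is nonzero and its annihilator is exactly `𝔪 = (x₁, x₂)`, so `𝔪` is an
associated prime and `depth M = 0`. A Stanley decomposition with every `Zᵢ = {x₁, x₂}` would
make `M` a direct sum of free `S`-modules, hence torsion-free, which `x₁ z̄ = 0` forbids; so
`sdepth M ≤ 1`. Equality is attained by the decomposition
`M = e₁K[x₁] ⊕ e₂K[x₂] ⊕ x₁e₂K[x₁] ⊕ x₂e₁K[x₂] ⊕ x₁x₂²e₁K[x₁,x₂]`, which rests on the relation
`h x₂ e₁ = h x₁ e₂` in `M` for every `h ∈ 𝔪`.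
-/

open MvPolynomial

variable {K : Type*} [Field K] {n : ℕ} {M : Type*} [AddCommGroup M]
  [Module K M] [Module (MvPolynomial (Fin n) K) M]
  [IsScalarTower K (MvPolynomial (Fin n) K) M]

/-- The element `z = x₁e₂ - x₂e₁` of the free module `Se₁ ⊕ Se₂` over `S = F[x₁,x₂]`. -/
noncomputable def popescuZ (F : Type*) [Field F] :
    MvPolynomial (Fin 2) F × MvPolynomial (Fin 2) F :=
  (-(X 1), X 0)

/-- The submodule of relations `(x₁z, x₂z)` of `Se₁ ⊕ Se₂`. -/
noncomputable def popescuRels (F : Type*) [Field F] :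
    Submodule (MvPolynomial (Fin 2) F) (MvPolynomial (Fin 2) F × MvPolynomial (Fin 2) F) :=
  Submodule.span _ {(X 0 : MvPolynomial (Fin 2) F) • popescuZ F,
    (X 1 : MvPolynomial (Fin 2) F) • popescuZ F}

/-- Popescu's example: `M = (Se₁ ⊕ Se₂)/(x₁z, x₂z)` with `z = x₁e₂ - x₂e₁`. -/
abbrev PopescuModule (F : Type*) [Field F] : Type _ :=
  (MvPolynomial (Fin 2) F × MvPolynomial (Fin 2) F) ⧸ popescuRels F

namespace MvPolynomial

variable {σ R : Type*} [CommSemiring R]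

lemma mem_idealOfVars_iff {p : MvPolynomial σ R} :
    p ∈ idealOfVars σ R ↔ constantCoeff p = 0 := by
  rw [← pow_one (idealOfVars σ R), mem_pow_idealOfVars_iff']
  refine ⟨fun h => h 0 (by simp), fun h x hx => ?_⟩
  rw [Nat.lt_one_iff, Finsupp.degree_eq_zero_iff] at hx
  rwa [hx, ← constantCoeff_eq]

lemma idealOfVars_eq_ker_constantCoeff :
    idealOfVars σ R = RingHom.ker (constantCoeff : MvPolynomial σ R →+* R) := by
  ext p
  rw [mem_idealOfVars_iff, RingHom.mem_ker]

lemma idealOfVars_isPrime [IsDomain R] : (idealOfVars σ R).IsPrime := by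
  rw [idealOfVars_eq_ker_constantCoeff]
  exact RingHom.ker_isPrime _

lemma smul_mem_of_forall_monomial_smul_mem {M : Type*} [AddCommMonoid M] [Module R M]
    [Module (MvPolynomial σ R) M] [IsScalarTower R (MvPolynomial σ R) M]
    {N : Submodule R M} {m : M} (h : ∀ d : σ →₀ ℕ, monomial d (1 : R) • m ∈ N)
    (p : MvPolynomial σ R) : p • m ∈ N := by
  induction p using MvPolynomial.induction_on' with
  | monomial d c =>
    rw [← mul_one c, ← smul_eq_mul, ← smul_monomial, smul_assoc]
    exact N.smul_mem c (h d)
  | add p q hp hq => rw [add_smul]; exact N.add_mem hp hq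

lemma X_pow_mem_supported [Nontrivial R] (i : σ) (a : ℕ) :
    (X i ^ a : MvPolynomial σ R) ∈ supported R {i} :=
  Subalgebra.pow_mem _ (X_mem_supported.mpr (Set.mem_singleton i)) a

noncomputable def restrictVars (s : Set σ) [DecidablePred (· ∈ s)] :
    MvPolynomial σ R →ₐ[R] MvPolynomial σ R :=
  aeval fun i => if i ∈ s then X i else 0

variable {s : Set σ} [DecidablePred (· ∈ s)] {p : MvPolynomial σ R}

@[simp] lemma restrictVars_X (i : σ) : restrictVars s (X i : MvPolynomial σ R) =
    if i ∈ s then X i else 0 :=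
  aeval_X _ _

lemma restrictVars_of_mem_supported (hp : p ∈ supported R s) : restrictVars s p = p :=
  aeval_ite_mem_eq_self p (mem_supported.mp hp)

lemma restrictVars_of_mem_supported_of_disjoint {t : Set σ} (hst : Disjoint s t)
    (hp : p ∈ supported R t) : restrictVars s p = C (constantCoeff p) :=
  aeval_eq_constantCoeff_of_vars fun _ hi =>
    if_neg (hst.notMem_of_mem_right (mem_supported.mp hp hi))

end MvPolynomial

lemma iSupIndep_of_forall_sum_eq_zero {ι R N : Type*} [Fintype ι] [Ring R] [AddCommGroup N]
    [Module R N] {p : ι → Submodule R N}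
    (h : ∀ v : ι → N, (∀ i, v i ∈ p i) → ∑ i, v i = 0 → ∀ i, v i = 0) : iSupIndep p := by
  classical
  rw [iSupIndep_iff_finsetSum_eq_zero_imp_eq_zero]
  intro s v hv hsum i hi
  have hext := h (fun j => if j ∈ s then v j else 0)
    (fun j => by split_ifs with hj; exacts [hv j hj, zero_mem _])
    (by rwa [Finset.sum_ite_mem, Finset.univ_inter]) i
  rwa [if_pos hi] at hext

lemma mem_stanleySpace_iff {m w : M} {Z : Finset (Fin n)} :
    w ∈ stanleySpace (K := K) m Z ↔ ∃ p ∈ supported K (Z : Set (Fin n)), p • m = w := by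
  simp only [stanleySpace, Submodule.mem_map, Subalgebra.mem_toSubmodule,
    LinearMap.coe_restrictScalars, LinearMap.toSpanSingleton_apply]

lemma smul_mem_stanleySpace {Z : Finset (Fin n)} {p : MvPolynomial (Fin n) K}
    (hp : p ∈ supported K (Z : Set (Fin n))) (m : M) : p • m ∈ stanleySpace (K := K) m Z :=
  mem_stanleySpace_iff.mpr ⟨p, hp, rfl⟩

lemma smul_mem_iSup_stanleySpace {r : ℕ} {elt : Fin r → M} {Z : Fin r → Finset (Fin n)}
    (i : Fin r) {p : MvPolynomial (Fin n) K} (hp : p ∈ supported K (Z i : Set (Fin n))) :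
    p • elt i ∈ ⨆ j, stanleySpace (K := K) (elt j) (Z j) :=
  le_iSup (fun j => stanleySpace (K := K) (elt j) (Z j)) i (smul_mem_stanleySpace hp _)

lemma MultiGrading.exists_mem_deg_X_smul (g : MultiGrading K n M) {m : M}
    (hm : ∃ a, m ∈ g.deg a) (i : Fin n) : ∃ a, (X i : MvPolynomial (Fin n) K) • m ∈ g.deg a :=
  let ⟨a, ha⟩ := hm
  ⟨_, g.monomial_smul_mem (Finsupp.single i 1) a m ha⟩

namespace StanleyDecomposition

variable {g : MultiGrading K n M}

noncomputable def ofIndependent {r : ℕ} (elt : Fin r → M) (Z : Fin r → Finset (Fin n))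
    (homogeneous : ∀ i, ∃ a, elt i ∈ g.deg a)
    (eq_zero : ∀ p : Fin r → MvPolynomial (Fin n) K,
      (∀ i, p i ∈ supported K (Z i : Set (Fin n))) → ∑ i, p i • elt i = 0 → ∀ i, p i = 0)
    (iSup_eq_top : ⨆ i, stanleySpace (K := K) (elt i) (Z i) = ⊤) : StanleyDecomposition g where
  r := r
  elt := elt
  Z := Z
  homogeneous := homogeneous
  free i q hq hq0 := by
    have := eq_zero (Pi.single i q) (fun j => ?_) ?_ i
    · rwa [Pi.single_eq_same] at this
    · rcases eq_or_ne j i with rfl | hji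
      · rwa [Pi.single_eq_same]
      · rw [Pi.single_eq_of_ne hji]; exact zero_mem _
    · rw [Fintype.sum_eq_single i fun j hji => by rw [Pi.single_eq_of_ne hji, zero_smul],
        Pi.single_eq_same, hq0]
  isInternal := by
    rw [DirectSum.isInternal_submodule_iff_iSupIndep_and_iSup_eq_top]
    refine ⟨iSupIndep_of_forall_sum_eq_zero fun v hv hsum i => ?_, iSup_eq_top⟩
    choose p hp hpv using fun j => mem_stanleySpace_iff.mp (hv j)
    rw [← hpv i, eq_zero p hp (by simpa only [hpv] using hsum) i, zero_smul]

variable (D : StanleyDecomposition g)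

lemma exists_sum_eq (m : M) : ∃ p : Fin D.r → MvPolynomial (Fin n) K,
    (∀ i, p i ∈ supported K (D.Z i : Set (Fin n))) ∧ ∑ i, p i • D.elt i = m := by
  have hm : m ∈ ⨆ i ∈ Finset.univ, stanleySpace (K := K) (D.elt i) (D.Z i) := by
    simp only [Finset.mem_univ, iSup_pos, D.isInternal.submodule_iSup_eq_top, Submodule.mem_top]
  obtain ⟨w, hw⟩ := (Submodule.mem_iSup_finset_iff_exists_sum _ m).mp hm
  choose p hp hpw using fun i => mem_stanleySpace_iff.mp (w i).2
  exact ⟨p, hp, by simp only [hpw, hw]⟩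

lemma eq_zero_of_sum_eq_zero {p : Fin D.r → MvPolynomial (Fin n) K}
    (hp : ∀ i, p i ∈ supported K (D.Z i : Set (Fin n))) (h : ∑ i, p i • D.elt i = 0)
    (i : Fin D.r) : p i = 0 :=
  D.free i (p i) (hp i) <|
    (iSupIndep_iff_finsetSum_eq_zero_imp_eq_zero _).mp D.isInternal.submodule_iSupIndep
      Finset.univ (fun j => p j • D.elt j) (fun j _ => smul_mem_stanleySpace (hp j) _) h i
      (Finset.mem_univ i)

lemma sdepth_lt_of_smul_eq_zero {p : MvPolynomial (Fin n) K} (hp : p ≠ 0) {m : M}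
    (hm : m ≠ 0) (hpm : p • m = 0) : D.sdepth < n := by
  by_contra! hn
  have hZ : ∀ i, D.Z i = Finset.univ := fun i =>
    Finset.eq_univ_of_card _ <| le_antisymm (by simpa using Finset.card_le_univ (D.Z i))
      (by simpa using (le_iInf_iff.mp hn i))
  have hsupp : ∀ i (q : MvPolynomial (Fin n) K), q ∈ supported K (D.Z i : Set (Fin n)) :=
    fun i q => by simp [hZ i]
  obtain ⟨q, hq, rfl⟩ := D.exists_sum_eq m
  have hpq : ∀ i, p * q i = 0 := D.eq_zero_of_sum_eq_zero (fun i => hsupp i _) <| by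
    simpa only [Finset.smul_sum, mul_smul] using hpm
  refine hm (Finset.sum_eq_zero fun i _ => ?_)
  rw [(mul_eq_zero.mp (hpq i)).resolve_left hp, zero_smul]

end StanleyDecomposition

namespace PopescuModule

variable (F : Type*) [Field F]

noncomputable def e₁ : PopescuModule F := Submodule.Quotient.mk (1, 0)

noncomputable def e₂ : PopescuModule F := Submodule.Quotient.mk (0, 1)

variable {F}

lemma mk_eq_smul_e₁_add_smul_e₂ (f g : MvPolynomial (Fin 2) F) :
    (Submodule.Quotient.mk (f, g) : PopescuModule F) = f • e₁ F + g • e₂ F := by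
  rw [e₁, e₂, ← Submodule.Quotient.mk_smul, ← Submodule.Quotient.mk_smul,
    ← Submodule.Quotient.mk_add]
  simp

lemma idealOfVars_le_colon_popescuRels :
    idealOfVars (Fin 2) F ≤ (popescuRels F).colon {popescuZ F} := by
  rw [Ideal.span_le, Set.range_subset_iff]
  intro i
  rw [SetLike.mem_coe, Submodule.mem_colon_singleton]
  fin_cases i
  exacts [Submodule.subset_span (Set.mem_insert _ _),
    Submodule.subset_span (Set.mem_insert_of_mem _ rfl)]

lemma mem_popescuRels_iff {v : MvPolynomial (Fin 2) F × MvPolynomial (Fin 2) F} :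
    v ∈ popescuRels F ↔
      ∃ h : MvPolynomial (Fin 2) F, constantCoeff h = 0 ∧ h • popescuZ F = v := by
  constructor
  · rw [popescuRels, Submodule.mem_span_pair]
    rintro ⟨a, b, rfl⟩
    exact ⟨a * X 0 + b * X 1, by simp, by rw [add_smul, mul_smul, mul_smul]⟩
  · rintro ⟨h, hh, rfl⟩
    exact Submodule.mem_colon_singleton.mp
      (idealOfVars_le_colon_popescuRels (mem_idealOfVars_iff.mpr hh))

lemma smul_e₁_add_smul_e₂_eq_zero_iff {f g : MvPolynomial (Fin 2) F} :
    f • e₁ F + g • e₂ F = 0 ↔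
      ∃ h : MvPolynomial (Fin 2) F, constantCoeff h = 0 ∧ -(h * X 1) = f ∧ h * X 0 = g := by
  rw [← mk_eq_smul_e₁_add_smul_e₂, Submodule.Quotient.mk_eq_zero, mem_popescuRels_iff]
  simp [popescuZ, Prod.ext_iff]

lemma mul_X_one_smul_e₁ {h : MvPolynomial (Fin 2) F} (hh : constantCoeff h = 0) :
    (h * X 1) • e₁ F = (h * X 0) • e₂ F := by
  rw [← neg_add_eq_zero, ← neg_smul]
  exact smul_e₁_add_smul_e₂_eq_zero_iff.mpr ⟨h, hh, rfl, rfl⟩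

lemma smul_mk_popescuZ_eq_zero_iff (q : MvPolynomial (Fin 2) F) :
    q • (Submodule.Quotient.mk (popescuZ F) : PopescuModule F) = 0 ↔ constantCoeff q = 0 := by
  rw [popescuZ, mk_eq_smul_e₁_add_smul_e₂, smul_add, smul_smul, smul_smul,
    smul_e₁_add_smul_e₂_eq_zero_iff]
  constructor
  · rintro ⟨h, hh, -, hq⟩
    rwa [← mul_right_cancel₀ (X_ne_zero 0) hq]
  · exact fun hq => ⟨q, hq, by ring, rfl⟩

lemma colon_bot_mk_popescuZ :
    (⊥ : Submodule (MvPolynomial (Fin 2) F) (PopescuModule F)).colon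
      {Submodule.Quotient.mk (popescuZ F)} = idealOfVars (Fin 2) F := by
  ext q
  rw [Submodule.mem_colon_singleton, Submodule.mem_bot, smul_mk_popescuZ_eq_zero_iff,
    mem_idealOfVars_iff]

lemma mk_popescuZ_ne_zero : (Submodule.Quotient.mk (popescuZ F) : PopescuModule F) ≠ 0 :=
  fun h => one_ne_zero <| (map_one constantCoeff).symm.trans <|
    (smul_mk_popescuZ_eq_zero_iff 1).mp (by rw [one_smul, h])

lemma X_smul_mk_popescuZ (i : Fin 2) :
    (X i : MvPolynomial (Fin 2) F) • (Submodule.Quotient.mk (popescuZ F) : PopescuModule F) = 0 :=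
  (smul_mk_popescuZ_eq_zero_iff _).mpr (constantCoeff_X F i)

variable (F) in
/-- The generators `e₁, e₂, x₁e₂, x₂e₁, x₁x₂²e₁` of the Stanley decomposition, with
`x₁ = X 0` and `x₂ = X 1`. -/
noncomputable def stanleyElt : Fin 5 → PopescuModule F :=
  ![e₁ F, e₂ F, (X 0 : MvPolynomial (Fin 2) F) • e₂ F, (X 1 : MvPolynomial (Fin 2) F) • e₁ F,
    (X 0 * X 1 ^ 2 : MvPolynomial (Fin 2) F) • e₁ F]

def stanleyVars : Fin 5 → Finset (Fin 2) :=
  ![{0}, {1}, {0}, {1}, Finset.univ]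

/-- `h₁`, `h₂` are the two coordinates of `∑ pᵢ • stanleyElt i = h • z`, lifted to `Se₁ ⊕ Se₂`;
setting `X 0 = 0` or `X 1 = 0` in them isolates the `pᵢ` one at a time. -/
lemma eq_zero_of_stanley_relation {p₀ p₁ p₂ p₃ p₄ h : MvPolynomial (Fin 2) F}
    (hp₀ : p₀ ∈ supported F {0}) (hp₁ : p₁ ∈ supported F {1})
    (hp₂ : p₂ ∈ supported F {0}) (hp₃ : p₃ ∈ supported F {1}) (hh : constantCoeff h = 0)
    (h₁ : -(h * X 1) = p₀ + p₃ * X 1 + p₄ * (X 0 * X 1 ^ 2)) (h₂ : h * X 0 = p₁ + p₂ * X 0) :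
    p₀ = 0 ∧ p₁ = 0 ∧ p₂ = 0 ∧ p₃ = 0 ∧ p₄ = 0 := by
  have hd : Disjoint ({1} : Set (Fin 2)) {0} := by simp
  have hp₁0 : p₁ = 0 := by
    simpa [restrictVars_of_mem_supported hp₁, eq_comm] using congrArg (restrictVars {1}) h₂
  obtain rfl : p₂ = h := by
    rw [hp₁0, zero_add] at h₂
    exact (mul_right_cancel₀ (X_ne_zero 0) h₂).symm
  have hp₀0 : p₀ = 0 := by
    simpa [restrictVars_of_mem_supported hp₀, eq_comm] using congrArg (restrictVars {0}) h₁
  have h₃ : p₃ + p₄ * (X 0 * X 1) + p₂ = 0 := by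
    refine (mul_eq_zero.mp ?_).resolve_right (X_ne_zero 1)
    linear_combination -h₁ - hp₀0
  have hp₃0 : p₃ = 0 := by
    simpa [restrictVars_of_mem_supported hp₃, restrictVars_of_mem_supported_of_disjoint hd hp₂,
      hh] using congrArg (restrictVars {1}) h₃
  have hp₂0 : p₂ = 0 := by
    simpa [restrictVars_of_mem_supported hp₂, hp₃0] using congrArg (restrictVars {0}) h₃
  refine ⟨hp₀0, hp₁0, hp₂0, hp₃0, ?_⟩
  rw [hp₃0, hp₂0, zero_add, add_zero] at h₃
  exact (mul_eq_zero.mp h₃).resolve_right (mul_ne_zero (X_ne_zero 0) (X_ne_zero 1))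

lemma stanleyElt_independent (p : Fin 5 → MvPolynomial (Fin 2) F)
    (hp : ∀ i, p i ∈ supported F (stanleyVars i : Set (Fin 2)))
    (hsum : ∑ i, p i • stanleyElt F i = 0) (i : Fin 5) : p i = 0 := by
  have hsum' :
      (p 0 + p 3 * X 1 + p 4 * (X 0 * X 1 ^ 2)) • e₁ F + (p 1 + p 2 * X 0) • e₂ F = 0 := by
    rw [← hsum, Fin.sum_univ_five]
    simp only [stanleyElt, Matrix.cons_val_zero, Matrix.cons_val_one, Matrix.cons_val]
    module
  obtain ⟨h, hh, h₁, h₂⟩ := smul_e₁_add_smul_e₂_eq_zero_iff.mp hsum'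
  have key := eq_zero_of_stanley_relation (by simpa [stanleyVars] using hp 0)
    (by simpa [stanleyVars] using hp 1) (by simpa [stanleyVars] using hp 2)
    (by simpa [stanleyVars] using hp 3) hh h₁ h₂
  fin_cases i <;> simp [key]

lemma smul_stanleyElt_mem (i : Fin 5) {p : MvPolynomial (Fin 2) F}
    (hp : p ∈ supported F (stanleyVars i : Set (Fin 2))) :
    p • stanleyElt F i ∈ ⨆ j, stanleySpace (K := F) (stanleyElt F j) (stanleyVars j) :=
  smul_mem_iSup_stanleySpace i hp

lemma X_pow_mul_X_pow_smul_e₁_mem (a b : ℕ) :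
    (X 0 ^ a * X 1 ^ b : MvPolynomial (Fin 2) F) • e₁ F ∈
      ⨆ i, stanleySpace (K := F) (stanleyElt F i) (stanleyVars i) := by
  rcases b with _ | b
  · simpa [stanleyElt] using smul_stanleyElt_mem 0 (by simp [stanleyVars, X_pow_mem_supported])
  rcases a with _ | a
  · convert smul_stanleyElt_mem (F := F) 3 (p := X 1 ^ b)
      (by simp [stanleyVars, X_pow_mem_supported]) using 1
    simp only [stanleyElt, Matrix.cons_val]
    module
  rcases b with _ | b
  · convert smul_stanleyElt_mem (F := F) 2 (p := X 0 ^ (a + 1))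
      (by simp [stanleyVars, X_pow_mem_supported]) using 1
    rw [zero_add, pow_one, mul_X_one_smul_e₁ (by simp)]
    simp only [stanleyElt, Matrix.cons_val]
    module
  · convert smul_stanleyElt_mem (F := F) 4 (p := X 0 ^ a * X 1 ^ b) (by simp [stanleyVars]) using 1
    simp only [stanleyElt, Matrix.cons_val]
    module

lemma X_pow_mul_X_pow_smul_e₂_mem (a b : ℕ) :
    (X 0 ^ a * X 1 ^ b : MvPolynomial (Fin 2) F) • e₂ F ∈
      ⨆ i, stanleySpace (K := F) (stanleyElt F i) (stanleyVars i) := by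
  rcases a with _ | a
  · simpa [stanleyElt] using smul_stanleyElt_mem 1 (by simp [stanleyVars, X_pow_mem_supported])
  rcases b with _ | b
  · convert smul_stanleyElt_mem (F := F) 2 (p := X 0 ^ a)
      (by simp [stanleyVars, X_pow_mem_supported]) using 1
    simp only [stanleyElt, Matrix.cons_val]
    module
  · have hrel : (X 0 ^ (a + 1) * X 1 ^ (b + 1) : MvPolynomial (Fin 2) F) • e₂ F =
        (X 0 ^ a * X 1 ^ (b + 2) : MvPolynomial (Fin 2) F) • e₁ F := by
      rw [show (X 0 ^ (a + 1) * X 1 ^ (b + 1) : MvPolynomial (Fin 2) F) =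
        X 0 ^ a * X 1 ^ (b + 1) * X 0 by ring, ← mul_X_one_smul_e₁ (by simp)]
      ring_nf
    rw [hrel]
    exact X_pow_mul_X_pow_smul_e₁_mem a (b + 2)

lemma iSup_stanleySpace_eq_top :
    ⨆ i, stanleySpace (K := F) (stanleyElt F i) (stanleyVars i) = ⊤ := by
  refine eq_top_iff.mpr fun m _ => ?_
  obtain ⟨⟨f, g⟩, rfl⟩ := Submodule.Quotient.mk_surjective _ m
  have hmonomial (d : Fin 2 →₀ ℕ) : monomial d (1 : F) = X 0 ^ d 0 * X 1 ^ d 1 := by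
    simp [monomial_eq, Finsupp.prod_fintype, Fin.prod_univ_two]
  rw [mk_eq_smul_e₁_add_smul_e₂]
  exact add_mem
    (smul_mem_of_forall_monomial_smul_mem
      (fun d => hmonomial d ▸ X_pow_mul_X_pow_smul_e₁_mem _ _) f)
    (smul_mem_of_forall_monomial_smul_mem
      (fun d => hmonomial d ▸ X_pow_mul_X_pow_smul_e₂_mem _ _) g)

variable (g : MultiGrading F 2 (PopescuModule F))

noncomputable def stanleyDecomposition (h₁ : ∃ a, e₁ F ∈ g.deg a) (h₂ : ∃ a, e₂ F ∈ g.deg a) :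
    StanleyDecomposition g :=
  .ofIndependent (stanleyElt F) stanleyVars
    (fun i => by
      fin_cases i
      · exact h₁
      · exact h₂
      · exact g.exists_mem_deg_X_smul h₂ 0
      · exact g.exists_mem_deg_X_smul h₁ 1
      · show ∃ a, (X 0 * X 1 ^ 2 : MvPolynomial (Fin 2) F) • e₁ F ∈ g.deg a
        simpa only [mul_smul, sq] using
          g.exists_mem_deg_X_smul (g.exists_mem_deg_X_smul (g.exists_mem_deg_X_smul h₁ 1) 1) 0)
    stanleyElt_independent iSup_stanleySpace_eq_top

lemma sdepth_stanleyDecomposition (h₁ : ∃ a, e₁ F ∈ g.deg a) (h₂ : ∃ a, e₂ F ∈ g.deg a) :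
    (stanleyDecomposition g h₁ h₂).sdepth = 1 :=
  show ⨅ i, ((stanleyVars i).card : ℕ∞) = 1 from
    le_antisymm (iInf_le_of_le 0 (by simp [stanleyVars]))
      (le_iInf fun i => by fin_cases i <;> simp [stanleyVars])

end PopescuModule

/-- For `S = F[x₁,x₂]` and `M = (Se₁ ⊕ Se₂)/(x₁z, x₂z)` with
`z = x₁e₂ - x₂e₁`, graded by `deg e₁ = (1,0)` and `deg e₂ = (0,1)`, one has
`depth M = 0` (i.e. `(x₁,x₂)` is an associated prime of `M`) and `sdepth M = 1`. -/
theorem popescuModule_depth_eq_zero_and_sdepth_eq_one {F : Type*} [Field F]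
    (g : MultiGrading F 2 (PopescuModule F))
    (h1 : Submodule.Quotient.mk ((1 : MvPolynomial (Fin 2) F), (0 : MvPolynomial (Fin 2) F))
        ∈ g.deg ![1, 0])
    (h2 : Submodule.Quotient.mk ((0 : MvPolynomial (Fin 2) F), (1 : MvPolynomial (Fin 2) F))
        ∈ g.deg ![0, 1]) :
    IsAssociatedPrime (Ideal.span (Set.range (X : Fin 2 → MvPolynomial (Fin 2) F)))
        (PopescuModule F) ∧
      stanleyDepth g = 1 := by
  refine ⟨isAssociatedPrime_iff.mpr
    ⟨idealOfVars_isPrime, _, PopescuModule.colon_bot_mk_popescuZ.symm⟩, le_antisymm ?_ ?_⟩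
  · refine iSup_le fun D => ENat.lt_natCast_add_one_iff.mp ?_
    exact D.sdepth_lt_of_smul_eq_zero (X_ne_zero 0) PopescuModule.mk_popescuZ_ne_zero
      (PopescuModule.X_smul_mk_popescuZ 0)
  · exact (PopescuModule.sdepth_stanleyDecomposition g ⟨_, h1⟩ ⟨_, h2⟩).ge.trans (le_iSup _ _)
end

section
/- Let $S=K[x_1,\ldots,x_n]$ and let $M_{n-1}$ be the cokernel of the map $\psi: S\to S^n=\bigoplus_{i=1}^n Se_i$ defined by $\psi(1)=x_1e_1+\cdots+x_ne_n$ (i.e., the $(n-1)$-st syzygy module of $K$ in the Koszul resolution). Then, writing $\bar e_i$ for the image of $e_i$ in $M_{n-1}$, one has the direct sum decomposition $M_{n-1}=S\bar e_1\oplus\cdots\oplus S\bar e_{n-1}\oplus K[x_1,\ldots,x_{n-1}]\bar e_n$, and $\operatorname{sdepth}(M_{n-1})=n-1$. -/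
open MvPolynomial

variable {K : Type*} [Field K] {n : ℕ} {M : Type*} [AddCommGroup M]
  [Module K M] [Module (MvPolynomial (Fin n) K) M]
  [IsScalarTower K (MvPolynomial (Fin n) K) M]

/-- The map `ψ : S → Sⁿ`, `ψ(1) = x₁e₁ + ⋯ + xₙeₙ`, whose cokernel is the
`(n-1)`-st syzygy module of `K` in the Koszul resolution. -/
noncomputable def koszulPsi (K : Type*) [Field K] (n : ℕ) :
    MvPolynomial (Fin n) K →ₗ[MvPolynomial (Fin n) K] (Fin n → MvPolynomial (Fin n) K) :=
  LinearMap.toSpanSingleton _ _ (fun i => X i)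

/-- The `(n-1)`-st syzygy module `M_(n-1) = Sⁿ/im ψ` of `K`. -/
abbrev SyzygyModule (K : Type*) [Field K] (n : ℕ) : Type _ :=
  (Fin n → MvPolynomial (Fin n) K) ⧸ LinearMap.range (koszulPsi K n)

/-!
Modulo `S • v`, `v = ∑ xᵢ eᵢ`, the relation `xⱼ ēⱼ = -∑_{i ≠ j} xᵢ ēᵢ` removes `xⱼ` from the
`j`-th coordinate, and a vector whose `j`-th coordinate is free of `xⱼ` lies in `S • v` only if it
is zero; this gives the decomposition, whose Stanley depth is `n - 1`. No Stanley decomposition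
does better: if all `Zᵢ` were full, `M` would be free, so `0 → S → Sⁿ → M → 0` would split, and
applying the retraction `Sⁿ → S • v` to `v` would write `1` as a combination of the `xᵢ`.
-/

theorem DirectSum.isInternal_submodule_of_exists_sum_of_sum_eq_zero {R N ι : Type*} [Ring R]
    [AddCommGroup N] [Module R N] [Fintype ι] [DecidableEq ι] (p : ι → Submodule R N)
    (hspan : ∀ x, ∃ v : ι → N, (∀ i, v i ∈ p i) ∧ ∑ i, v i = x)
    (hindep : ∀ v : ι → N, (∀ i, v i ∈ p i) → ∑ i, v i = 0 → ∀ i, v i = 0) :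
    DirectSum.IsInternal p := by
  refine DirectSum.isInternal_submodule_of_iSupIndep_of_iSup_eq_top ?_ ?_
  · refine (iSupIndep_iff_finsetSum_eq_zero_imp_eq_zero p).mpr fun s v hv hsum i hi => ?_
    classical
    simpa [hi] using hindep (fun i => if i ∈ s then v i else 0)
      (fun i => by split_ifs with h; exacts [hv i h, zero_mem _])
      (by rwa [Finset.sum_ite_mem, Finset.univ_inter]) i
  · refine eq_top_iff.mpr fun x _ => ?_
    obtain ⟨v, hv, rfl⟩ := hspan x
    exact Submodule.sum_mem _ fun i _ => Submodule.mem_iSup_of_mem i (hv i)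

section MvPolynomial

variable {R σ : Type*} [CommSemiring R]

theorem MvPolynomial.exists_mem_supported_add_X_mul (j : σ) (p : MvPolynomial σ R) :
    ∃ h ∈ supported R {j}ᶜ, ∃ q, p = h + X j * q := by
  induction p using MvPolynomial.induction_on with
  | C a => exact ⟨C a, Subalgebra.algebraMap_mem _ a, 0, by ring⟩
  | add p q hp hq =>
    obtain ⟨h₁, hh₁, q₁, rfl⟩ := hp
    obtain ⟨h₂, hh₂, q₂, rfl⟩ := hq
    exact ⟨h₁ + h₂, add_mem hh₁ hh₂, q₁ + q₂, by ring⟩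
  | mul_X p i hp =>
    obtain ⟨h, hh, q, rfl⟩ := hp
    by_cases hij : i = j
    · subst hij
      exact ⟨0, zero_mem _, h + X i * q, by ring⟩
    · exact ⟨h * X i, mul_mem hh (Algebra.subset_adjoin ⟨i, hij, rfl⟩), q * X i, by ring⟩

theorem MvPolynomial.eq_zero_of_mul_X_mem_supported {s : Set σ} {j : σ} (hj : j ∉ s)
    {q : MvPolynomial σ R} (hq : q * X j ∈ supported R s) : q = 0 := by
  classical
  by_contra hq0
  obtain ⟨d, hd⟩ := support_nonempty.mpr hq0
  have hvars : j ∈ (q * X j).vars := (mem_vars_iff_mem_support j).mpr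
    ⟨d + Finsupp.single j 1, by simpa [support_mul_X] using hd, by simp⟩
  exact hj (mem_supported.mp hq hvars)

end MvPolynomial

section Stanley

theorem mem_stanleySpace {m x : M} {Z : Finset (Fin n)} :
    x ∈ stanleySpace (K := K) m Z ↔ ∃ p ∈ supported K (Z : Set (Fin n)), p • m = x := by
  simp [stanleySpace]

variable {g : MultiGrading K n M}

theorem StanleyDecomposition.free_of_forall_eq_univ (D : StanleyDecomposition g)
    (hD : ∀ i, D.Z i = Finset.univ) : Module.Free (MvPolynomial (Fin n) K) M := by
  have hmem (i) (p : MvPolynomial (Fin n) K) :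
      p • D.elt i ∈ stanleySpace (K := K) (D.elt i) (D.Z i) :=
    mem_stanleySpace.mpr ⟨p, by simp [hD i], rfl⟩
  have hli : LinearIndependent (MvPolynomial (Fin n) K) D.elt := by
    refine Fintype.linearIndependent_iff.mpr fun c hc i => D.free i _ (by simp [hD i]) ?_
    exact (iSupIndep_iff_finsetSum_eq_zero_imp_eq_zero _).mp D.isInternal.submodule_iSupIndep
      Finset.univ _ (fun i _ => hmem i (c i)) hc i (Finset.mem_univ i)
  have hsp : ⊤ ≤ Submodule.span (MvPolynomial (Fin n) K) (Set.range D.elt) := by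
    intro x _
    have hx : x ∈ ⨆ i, stanleySpace (K := K) (D.elt i) (D.Z i) :=
      D.isInternal.submodule_iSup_eq_top ▸ Submodule.mem_top
    refine (iSup_le fun i => ?_ :
      _ ≤ (Submodule.span (MvPolynomial (Fin n) K) (Set.range D.elt)).restrictScalars K) hx
    rintro _ hy
    obtain ⟨p, -, rfl⟩ := mem_stanleySpace.mp hy
    exact Submodule.smul_mem _ p (Submodule.subset_span ⟨i, rfl⟩)
  exact Module.Free.of_basis (Module.Basis.mk hli hsp)

theorem StanleyDecomposition.sdepth_le_of_not_free (D : StanleyDecomposition g)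
    (hM : ¬ Module.Free (MvPolynomial (Fin n) K) M) : D.sdepth ≤ (n - 1 : ℕ) := by
  obtain ⟨i, hi⟩ : ∃ i, D.Z i ≠ Finset.univ := by
    by_contra! h
    exact hM (D.free_of_forall_eq_univ h)
  have hcard : (D.Z i).card < n := by simpa using (Finset.card_lt_iff_ne_univ _).mpr hi
  exact (iInf_le _ i).trans (by exact_mod_cast (by omega : (D.Z i).card ≤ n - 1))

end Stanley

theorem Module.not_projective_pi_quotient_span_singleton {R ι : Type*} [CommRing R] [IsDomain R]
    [Fintype ι] [DecidableEq ι] {v : ι → R} (hv : v ≠ 0)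
    (hspan : Ideal.span (Set.range v) ≠ ⊤) :
    ¬ Module.Projective R ((ι → R) ⧸ (R ∙ v)) := by
  intro _
  obtain ⟨σ, hσ⟩ := Module.projective_lifting_property (R ∙ v).mkQ LinearMap.id
    (Submodule.mkQ_surjective _)
  set π := LinearMap.id - σ ∘ₗ (R ∙ v).mkQ
  have hπ (x : ι → R) : ∃ r : R, r • v = π x := by
    refine Submodule.mem_span_singleton.mp ?_
    rw [← Submodule.ker_mkQ (R ∙ v), LinearMap.mem_ker]
    simpa [π, sub_eq_zero] using (LinearMap.congr_fun hσ _).symm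
  choose q hq using fun i => hπ (Pi.single i 1)
  have hπv : π v = v := by
    simp [π, (Submodule.Quotient.mk_eq_zero _).mpr (Submodule.mem_span_singleton_self v)]
  have hsum : (∑ i, q i * v i) • v = v := by
    calc (∑ i, q i * v i) • v = ∑ i, v i • π (Pi.single i 1) := by
          simp only [Finset.sum_smul, ← hq, smul_smul, mul_comm]
      _ = π v := by
          simp_rw [← map_smul, ← map_sum, ← pi_eq_sum_univ']
      _ = v := hπv
  have h1 : ∑ i, q i * v i = 1 := by
    have : (∑ i, q i * v i - 1) • v = 0 := by rw [sub_smul, hsum, one_smul, sub_self]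
    exact sub_eq_zero.mp ((smul_eq_zero.mp this).resolve_right hv)
  exact hspan ((Ideal.eq_top_iff_one _).mpr (Ideal.mem_span_range_iff_exists_fun.mpr ⟨q, h1⟩))

namespace SyzygyModule

variable (K) in
noncomputable def gen (i : Fin n) : SyzygyModule K n :=
  Submodule.Quotient.mk (Pi.single i 1)

theorem range_koszulPsi :
    LinearMap.range (koszulPsi K n) = (MvPolynomial (Fin n) K ∙ fun i => X i) :=
  (LinearMap.span_singleton_eq_range _ _ _).symm

theorem mk_eq_zero_iff {f : Fin n → MvPolynomial (Fin n) K} :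
    (Submodule.Quotient.mk f : SyzygyModule K n) = 0 ↔
      ∃ q : MvPolynomial (Fin n) K, (q • fun i => X i) = f := by
  rw [Submodule.Quotient.mk_eq_zero, range_koszulPsi, Submodule.mem_span_singleton]

theorem smul_gen (p : MvPolynomial (Fin n) K) (i : Fin n) :
    p • gen K i = Submodule.Quotient.mk (Pi.single i p) := by
  rw [gen, ← Submodule.Quotient.mk_smul]
  congr 1
  ext k
  simp [Pi.single_apply]

theorem mk_eq_sum_smul_gen (f : Fin n → MvPolynomial (Fin n) K) :
    (Submodule.Quotient.mk f : SyzygyModule K n) = ∑ i, f i • gen K i := by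
  simp_rw [smul_gen, ← Submodule.mkQ_apply, ← map_sum, Finset.univ_sum_single]

theorem eq_zero_of_mk_eq_zero {j : Fin n} {f : Fin n → MvPolynomial (Fin n) K}
    (hj : f j ∈ supported K {j}ᶜ) (hf : (Submodule.Quotient.mk f : SyzygyModule K n) = 0) :
    f = 0 := by
  obtain ⟨q, rfl⟩ := mk_eq_zero_iff.mp hf
  have hq : q = 0 :=
    eq_zero_of_mul_X_mem_supported (s := {j}ᶜ) (j := j) (by simp) (by simpa using hj)
  rw [hq, zero_smul]

theorem exists_mk_eq (j : Fin n) (x : SyzygyModule K n) :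
    ∃ f : Fin n → MvPolynomial (Fin n) K,
      f j ∈ supported K {j}ᶜ ∧ Submodule.Quotient.mk f = x := by
  obtain ⟨f, rfl⟩ := Submodule.Quotient.mk_surjective _ x
  obtain ⟨h, hh, q, hfj⟩ := exists_mem_supported_add_X_mul j (f j)
  refine ⟨f - q • fun i => X i, by simpa [hfj, mul_comm] using hh, ?_⟩
  rw [Submodule.Quotient.mk_sub, mk_eq_zero_iff.mpr ⟨q, rfl⟩, sub_zero]

def stanleyVars (j i : Fin n) : Finset (Fin n) :=
  if i = j then Finset.univ.erase i else Finset.univ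

theorem mem_supported_stanleyVars {j i : Fin n} {p : MvPolynomial (Fin n) K} :
    p ∈ supported K (stanleyVars j i : Set (Fin n)) ↔ (i = j → p ∈ supported K {j}ᶜ) := by
  unfold stanleyVars
  split_ifs with h <;> simp [h, Set.compl_eq_univ_sdiff]

theorem card_stanleyVars (j i : Fin n) : (stanleyVars j i).card = if i = j then n - 1 else n := by
  unfold stanleyVars
  split_ifs <;> simp

theorem eq_zero_of_smul_gen_eq_zero {j i : Fin n} {p : MvPolynomial (Fin n) K}
    (hp : p ∈ supported K (stanleyVars j i : Set (Fin n))) (h : p • gen K i = 0) : p = 0 := by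
  rw [smul_gen] at h
  have hj : (Pi.single i p : Fin n → MvPolynomial (Fin n) K) j ∈ supported K {j}ᶜ := by
    rcases eq_or_ne i j with rfl | hij
    · simpa using mem_supported_stanleyVars.mp hp rfl
    · simp [Pi.single_eq_of_ne' hij]
  simpa using congrFun (eq_zero_of_mk_eq_zero hj h) i

theorem isInternal_stanleySpace_gen (j : Fin n) :
    DirectSum.IsInternal fun i => stanleySpace (K := K) (gen K i) (stanleyVars j i) := by
  refine DirectSum.isInternal_submodule_of_exists_sum_of_sum_eq_zero _
    (fun x => ?_) (fun v hv hsum => ?_)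
  · obtain ⟨f, hf, rfl⟩ := exists_mk_eq j x
    refine ⟨fun i => f i • gen K i, fun i => mem_stanleySpace.mpr ⟨f i, ?_, rfl⟩,
      (mk_eq_sum_smul_gen f).symm⟩
    exact mem_supported_stanleyVars.mpr (by rintro rfl; exact hf)
  · choose f hf hfv using fun i => mem_stanleySpace.mp (hv i)
    have hf0 : f = 0 := eq_zero_of_mk_eq_zero (mem_supported_stanleyVars.mp (hf j) rfl)
      (by rw [mk_eq_sum_smul_gen]; simpa [hfv] using hsum)
    simp [← hfv, hf0]

noncomputable def stanleyDecomposition (g : MultiGrading K n (SyzygyModule K n))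
    (hg : ∀ i, ∃ a, gen K i ∈ g.deg a) (j : Fin n) : StanleyDecomposition g where
  r := n
  elt := gen K
  Z := stanleyVars j
  homogeneous := hg
  free _ _ := eq_zero_of_smul_gen_eq_zero
  isInternal := isInternal_stanleySpace_gen j

theorem sdepth_stanleyDecomposition (g : MultiGrading K n (SyzygyModule K n))
    (hg : ∀ i, ∃ a, gen K i ∈ g.deg a) (j : Fin n) :
    (stanleyDecomposition g hg j).sdepth = (n - 1 : ℕ) := by
  change ⨅ i : Fin n, ((stanleyVars j i).card : ℕ∞) = _
  refine le_antisymm (iInf_le_of_le j ?_) (le_iInf fun i => ?_) <;> rw [card_stanleyVars]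
  · simp
  · split_ifs <;> norm_num

theorem not_free (hn : 0 < n) : ¬ Module.Free (MvPolynomial (Fin n) K) (SyzygyModule K n) := by
  intro _
  have hproj : Module.Projective (MvPolynomial (Fin n) K)
      ((Fin n → MvPolynomial (Fin n) K) ⧸ LinearMap.range (koszulPsi K n)) := inferInstance
  rw [range_koszulPsi] at hproj
  refine Module.not_projective_pi_quotient_span_singleton
    (fun h => X_ne_zero ⟨0, hn⟩ (congrFun h _)) ?_ hproj
  refine ne_top_of_le_ne_top (RingHom.ker_ne_top (constantCoeff (R := K) (σ := Fin n))) ?_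
  exact Ideal.span_le.mpr (Set.range_subset_iff.mpr fun i => by simp)

end SyzygyModule

/-- Let `M_(n-1)` be the cokernel of `ψ : S → Sⁿ`,
`ψ(1) = x₁e₁ + ⋯ + xₙeₙ`, where `S = K[x₁,…,xₙ]`.  Then
`M_(n-1) = Sē₁ ⊕ ⋯ ⊕ Sē_(n-1) ⊕ K[x₁,…,x_(n-1)]ēₙ` (a Stanley decomposition),
and `sdepth M_(n-1) = n - 1`. -/
theorem syzygyModule_decomposition_and_sdepth {K : Type*} [Field K] {n : ℕ} (hn : 0 < n)
    (g : MultiGrading K n (SyzygyModule K n))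
    (hg : ∀ i : Fin n, (Submodule.Quotient.mk (Pi.single i (1 : MvPolynomial (Fin n) K))
        : SyzygyModule K n) ∈ g.deg (fun j => if j = i then 0 else 1)) :
    DirectSum.IsInternal (fun i : Fin n =>
      stanleySpace (K := K)
        (Submodule.Quotient.mk (Pi.single i (1 : MvPolynomial (Fin n) K)) : SyzygyModule K n)
        (if i = (⟨n - 1, by omega⟩ : Fin n) then Finset.univ.erase i else Finset.univ)) ∧
    stanleyDepth g = ((n - 1 : ℕ) : ℕ∞) := by
  set j : Fin n := ⟨n - 1, by omega⟩
  refine ⟨SyzygyModule.isInternal_stanleySpace_gen j, le_antisymm ?_ ?_⟩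
  · exact iSup_le fun D => D.sdepth_le_of_not_free (SyzygyModule.not_free hn)
  · rw [← SyzygyModule.sdepth_stanleyDecomposition g (fun i => ⟨_, hg i⟩) j]
    exact le_iSup _ _
end

section
/- Let $n,k$ be positive integers, $P$ the set of monomials $u\in\mathbf{m}^k$ dividing $(x_1\cdots x_n)^k$, partially ordered by divisibility, and suppose $P=\bigcup_{i=1}^r[x^{c_i},x^{d_i}]$ is a partition of $P$ into disjoint intervals such that $\rho(x^{d_i})\ge a+1$ for all $i$, where $\rho(u)=|\{j: x_j^k \text{ divides } u\}|$. Then, denoting by $\alpha_d$ the number of degree-$d$ elements of $P$, one has $\alpha_{k+1}\ge na+(\alpha_k-n)(a+1)$. -/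
/-! Every monomial `u` of degree `k` is the lower end of its interval `[u, w]`, which contains the
covers `u·xⱼ` for all `j` with `uⱼ < wⱼ`; for distinct `u` these covers are distinct monomials of
degree `k + 1`. Each `j` with `wⱼ = k` either has `uⱼ < wⱼ` or `uⱼ = k`, so `ρ(w) ≥ a + 1` gives
`(a + 1)·α_k ≤ α_{k+1} + ∑_u ρ(u)`, and over degree `k` the sum `∑_u ρ(u)` is at most `n`: only
the pure powers `xⱼ^k` contribute, one each. -/

open Finset

namespace MonomialDivisors

variable {ι : Type*} {k : ℕ}

section Bump

variable [DecidableEq ι]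

/-- Multiply by `xⱼ`, capping the exponent at `k`. -/
def bump (u : ι → Fin (k + 1)) (j : ι) : ι → Fin (k + 1) :=
  Function.update u j ⟨min (u j + 1) k, Nat.lt_succ_of_le (min_le_right _ _)⟩

variable {u v : ι → Fin (k + 1)} {j : ι}

lemma bump_apply_self (h : (u j : ℕ) < k) : (bump u j j : ℕ) = u j + 1 := by
  simp only [bump, Function.update_self]
  omega

lemma bump_apply_of_ne {j' : ι} (h : j' ≠ j) : bump u j j' = u j' :=
  Function.update_of_ne h _ _

lemma le_bump : u ≤ bump u j := by
  intro j'
  rcases eq_or_ne j' j with rfl | h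
  · simp only [bump, Function.update_self, Fin.le_def]
    omega
  · rw [bump_apply_of_ne h]

lemma bump_le (hj : u j < v j) (huv : u ≤ v) : bump u j ≤ v := by
  intro j'
  rcases eq_or_ne j' j with rfl | h
  · simp only [bump, Function.update_self, Fin.le_def]
    omega
  · rw [bump_apply_of_ne h]
    exact huv j'

lemma bump_injOn : Set.InjOn (bump u) {j | (u j : ℕ) < k} := by
  intro j hj j' _ heq
  by_contra hne
  have := congrArg (fun w => (w j : ℕ)) heq
  simp only [bump_apply_self hj, bump_apply_of_ne hne] at this
  omega

end Bump

variable [Fintype ι]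

def degree (u : ι → Fin (k + 1)) : ℕ := ∑ j, (u j : ℕ)

lemma eq_of_le_of_degree_le {u v : ι → Fin (k + 1)} (huv : u ≤ v) (h : degree v ≤ degree u) :
    u = v := by
  have hle : ∀ j ∈ univ, (u j : ℕ) ≤ v j := fun j _ => huv j
  have hsum := (sum_eq_sum_iff_of_le hle).mp (le_antisymm (sum_le_sum hle) h)
  exact funext fun j => Fin.ext (hsum j (mem_univ j))

lemma exists_lo_eq_of_degree_eq {I : Type*} {lo hi : I → ι → Fin (k + 1)}
    (hloP : ∀ i, k ≤ degree (lo i))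
    (hpart : ∀ v : ι → Fin (k + 1), k ≤ degree v → ∃! i, lo i ≤ v ∧ v ≤ hi i)
    {u : ι → Fin (k + 1)} (hu : degree u = k) : ∃ i, lo i = u ∧ u ≤ hi i := by
  obtain ⟨i, ⟨hlo, hhi⟩, -⟩ := hpart u hu.ge
  exact ⟨i, eq_of_le_of_degree_le hlo (hu.trans_le (hloP i)), hhi⟩

variable [DecidableEq ι]

lemma degree_bump {u : ι → Fin (k + 1)} {j : ι} (h : (u j : ℕ) < k) :
    degree (bump u j) = degree u + 1 := by
  rw [degree, degree, ← add_sum_erase _ _ (mem_univ j), ← add_sum_erase _ _ (mem_univ j),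
    bump_apply_self h, sum_congr rfl fun j' hj' => by rw [bump_apply_of_ne (ne_of_mem_erase hj')]]
  ring

variable (ι) in
def layer (k d : ℕ) : Finset (ι → Fin (k + 1)) := univ.filter fun u => degree u = d

@[simp]
lemma mem_layer {d : ℕ} {u : ι → Fin (k + 1)} : u ∈ layer ι k d ↔ degree u = d := by
  simp [layer]

open scoped Classical in
lemma card_filter_lt_le_card_covers {u w : ι → Fin (k + 1)} (huw : u ≤ w) :
    #(univ.filter fun j => u j < w j) ≤
      #((layer ι k (degree u + 1)).filter fun v => u ≤ v ∧ v ≤ w) := by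
  have hk : ∀ j, u j < w j → (u j : ℕ) < k := fun j hj => lt_of_lt_of_le hj (Fin.is_le _)
  refine card_le_card_of_injOn (bump u) (fun j hj => ?_) (bump_injOn.mono fun j hj => ?_)
  · simp only [coe_filter, mem_univ, true_and] at hj
    simp [degree_bump (hk j hj), le_bump, bump_le hj huw]
  · simp only [coe_filter, mem_univ, true_and] at hj
    exact hk j hj

/-- The exponents of `u` equal to `k`; their number is `ρ(u)`. -/
def saturated (u : ι → Fin (k + 1)) : Finset ι := univ.filter fun j => (u j : ℕ) = k

lemma card_saturated_le {u w : ι → Fin (k + 1)} (huw : u ≤ w) :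
    #(saturated w) ≤ #(univ.filter fun j => u j < w j) + #(saturated u) := by
  refine (card_le_card fun j hj => ?_).trans (card_union_le _ _)
  simp only [saturated, mem_filter, mem_univ, true_and, mem_union] at hj ⊢
  have := Fin.is_le (u j)
  have := huw j
  rw [Fin.lt_def]
  omega

lemma eq_pi_single_of_mem_saturated {u : ι → Fin (k + 1)} (hu : degree u = k) {j : ι}
    (hj : j ∈ saturated u) : u = Pi.single j (Fin.last k) := by
  have hdeg : degree (Pi.single j (Fin.last k) : ι → Fin (k + 1)) = k := by
    rw [degree, sum_eq_single j (fun j' _ hj' => by simp [Pi.single_eq_of_ne hj']) (by simp)]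
    simp
  refine (eq_of_le_of_degree_le (fun j' => ?_) (by rw [hu, hdeg])).symm
  rcases eq_or_ne j' j with rfl | hj'
  · simp only [saturated, mem_filter] at hj
    simp [Fin.le_def, hj.2]
  · simp [Pi.single_eq_of_ne hj']

lemma sum_card_saturated_layer_le : ∑ u ∈ layer ι k k, #(saturated u) ≤ Fintype.card ι := by
  calc ∑ u ∈ layer ι k k, #(saturated u)
      = ∑ j, #((layer ι k k).bipartiteBelow (fun u j => (u j : ℕ) = k) j) :=
        sum_card_bipartiteAbove_eq_sum_card_bipartiteBelow _
    _ ≤ ∑ _j : ι, 1 := sum_le_sum fun j _ => card_le_one.mpr fun u hu v hv => by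
        simp only [bipartiteBelow, mem_filter, mem_layer] at hu hv
        rw [eq_pi_single_of_mem_saturated hu.1 (j := j) (by simp [saturated, hu.2]),
          eq_pi_single_of_mem_saturated hv.1 (j := j) (by simp [saturated, hv.2])]
    _ = Fintype.card ι := by simp

section IntervalPartition

open scoped Classical

variable {I : Type*} (lo hi : I → ι → Fin (k + 1))

noncomputable def coversAbove (u : ι → Fin (k + 1)) : Finset (ι → Fin (k + 1)) :=
  (layer ι k (k + 1)).filter fun v => ∃ i, lo i = u ∧ u ≤ v ∧ v ≤ hi i

variable {lo hi}

lemma coversAbove_subset {u : ι → Fin (k + 1)} : coversAbove lo hi u ⊆ layer ι k (k + 1) :=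
  fun _ hv => (mem_filter.mp hv).1

variable (hloP : ∀ i, k ≤ degree (lo i))
  (hpart : ∀ v : ι → Fin (k + 1), k ≤ degree v → ∃! i, lo i ≤ v ∧ v ≤ hi i)
include hpart

lemma pairwise_disjoint_coversAbove : Pairwise (Function.onFun Disjoint (coversAbove lo hi)) := by
  intro u u' hne
  refine disjoint_left.mpr fun v hv hv' => hne ?_
  simp only [coversAbove, mem_filter, mem_layer] at hv hv'
  obtain ⟨hdeg, i, rfl, hiv, hvi⟩ := hv
  obtain ⟨-, i', rfl, hi'v, hvi'⟩ := hv'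
  rw [(hpart v (by omega)).unique ⟨hiv, hvi⟩ ⟨hi'v, hvi'⟩]

lemma sum_card_coversAbove_le :
    ∑ u ∈ layer ι k k, #(coversAbove lo hi u) ≤ #(layer ι k (k + 1)) := by
  rw [← card_biUnion ((pairwise_disjoint_coversAbove hpart).set_pairwise _)]
  exact card_le_card (biUnion_subset.mpr fun _ _ => coversAbove_subset)

include hloP

lemma exists_card_saturated_le {u : ι → Fin (k + 1)} (hu : degree u = k) :
    ∃ i, #(saturated (hi i)) ≤ #(coversAbove lo hi u) + #(saturated u) := by
  obtain ⟨i, hlo, huhi⟩ := exists_lo_eq_of_degree_eq hloP hpart hu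
  refine ⟨i, (card_saturated_le huhi).trans (Nat.add_le_add_right ?_ _)⟩
  refine (card_filter_lt_le_card_covers huhi).trans (card_le_card fun v hv => ?_)
  simp only [mem_filter, mem_layer, hu] at hv
  simp only [coversAbove, mem_filter, mem_layer]
  exact ⟨hv.1, i, hlo, hv.2⟩

lemma mul_card_layer_le {a : ℕ} (hrho : ∀ i, a + 1 ≤ #(saturated (hi i))) :
    (a + 1) * #(layer ι k k) ≤ #(layer ι k (k + 1)) + Fintype.card ι := by
  calc (a + 1) * #(layer ι k k) = ∑ _u ∈ layer ι k k, (a + 1) := by simp [mul_comm]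
    _ ≤ ∑ u ∈ layer ι k k, (#(coversAbove lo hi u) + #(saturated u)) :=
        sum_le_sum fun u hu => by
          obtain ⟨i, hi⟩ := exists_card_saturated_le hloP hpart (mem_layer.mp hu)
          exact (hrho i).trans hi
    _ = ∑ u ∈ layer ι k k, #(coversAbove lo hi u) + ∑ u ∈ layer ι k k, #(saturated u) :=
        sum_add_distrib
    _ ≤ #(layer ι k (k + 1)) + Fintype.card ι :=
        add_le_add (sum_card_coversAbove_le hpart) sum_card_saturated_layer_le

end IntervalPartition

end MonomialDivisors

theorem interval_partition_layer_count_general (n k a r : ℕ)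
    (lo hi : Fin r → (Fin n → Fin (k + 1)))
    (hloP : ∀ i, k ≤ ∑ j, (lo i j : ℕ))
    (hpart : ∀ u : Fin n → Fin (k + 1), k ≤ ∑ j, (u j : ℕ) →
      ∃! i, lo i ≤ u ∧ u ≤ hi i)
    (hrho : ∀ i, a + 1 ≤ (Finset.univ.filter fun j => (hi i j : ℕ) = k).card) :
    (n : ℤ) * a +
        (((Finset.univ.filter fun u : Fin n → Fin (k + 1) =>
            ∑ j, (u j : ℕ) = k).card : ℤ) - n) * (a + 1) ≤
      ((Finset.univ.filter fun u : Fin n → Fin (k + 1) =>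
          ∑ j, (u j : ℕ) = k + 1).card : ℤ) := by
  have h := MonomialDivisors.mul_card_layer_le hloP hpart hrho
  rw [Fintype.card_fin] at h
  have h' : ((a : ℤ) + 1) * #(MonomialDivisors.layer (Fin n) k k) ≤
      #(MonomialDivisors.layer (Fin n) k (k + 1)) + n := by
    exact_mod_cast h
  unfold MonomialDivisors.layer MonomialDivisors.degree at h'
  linarith

/-- Identify monomials `u` dividing `(x₁⋯xₙ)^k` with tuples
`u : Fin n → Fin (k+1)` (exponent vectors), ordered by divisibility (the pointwise
order), and let `P` be the poset of such monomials of degree `≥ k` (the monomials of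
`𝔪^k` dividing `(x₁⋯xₙ)^k`).  Suppose `P = ⋃ᵢ [loᵢ, hiᵢ]` is a partition of `P` into
disjoint intervals (every `u ∈ P` lies in exactly one interval, and each `loᵢ ∈ P`)
such that `ρ(hiᵢ) ≥ a + 1` for all `i`, where `ρ(u) = #{j : xⱼ^k ∣ u}`.  Then,
with `α_d` the number of degree-`d` elements of `P`,
`α_(k+1) ≥ n·a + (α_k - n)·(a+1)`. -/
theorem interval_partition_layer_count (n k a r : ℕ) (hn : 0 < n) (hk : 0 < k)
    (lo hi : Fin r → (Fin n → Fin (k + 1)))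
    (hloP : ∀ i, k ≤ ∑ j, (lo i j : ℕ))
    (hlohi : ∀ i, lo i ≤ hi i)
    (hpart : ∀ u : Fin n → Fin (k + 1), k ≤ ∑ j, (u j : ℕ) →
      ∃! i, lo i ≤ u ∧ u ≤ hi i)
    (hrho : ∀ i, a + 1 ≤ (Finset.univ.filter fun j => (hi i j : ℕ) = k).card) :
    (n : ℤ) * a +
        (((Finset.univ.filter fun u : Fin n → Fin (k + 1) =>
            ∑ j, (u j : ℕ) = k).card : ℤ) - n) * (a + 1) ≤
      ((Finset.univ.filter fun u : Fin n → Fin (k + 1) =>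
          ∑ j, (u j : ℕ) = k + 1).card : ℤ) :=
  interval_partition_layer_count_general n k a r lo hi hloP hpart hrho
end

section
/- Let $I\subseteq S=K[x_1,\ldots,x_n]$ be a monomial ideal and $\mathbf{m}=(x_1,\ldots,x_n)$. Then $\operatorname{sdepth}(\mathbf{m}^kI)=1$ for all sufficiently large $k$. -/
open MvPolynomial

variable {K : Type*} [Field K] {n : ℕ} {M : Type*} [AddCommGroup M]
  [Module K M] [Module (MvPolynomial (Fin n) K) M]
  [IsScalarTower K (MvPolynomial (Fin n) K) M]

/-- The maximal irrelevant ideal `𝔪 = (x₁,…,xₙ)` of `S = K[x₁,…,xₙ]`. -/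
noncomputable def maxIdeal (K : Type*) [Field K] (n : ℕ) : Ideal (MvPolynomial (Fin n) K) :=
  Ideal.span (Set.range X)

/-! In the natural multigrading every homogeneous element of `J = 𝔪ᵏ I` is a scalar multiple of
a monomial, so a Stanley decomposition of `J` amounts to a partition of the exponent set `E` of `J`
into finitely many orthants `cᵢ + ℕ^{Zᵢ}`, of depth `minᵢ |Zᵢ|`.

Such a partition with `z ∈ Zᵢ` for a fixed variable `z` always exists: as `E` is finitely
generated, capping the exponents of `e ∈ E` at some `D` keeps them in `E`, and `e` is assigned to
the corner whose coordinates away from `z` are those of `e ⊓ D` and whose `z`-coordinate is the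
least one keeping it in `E`.

Conversely, if every `|Zᵢ| ≥ 2`, every exponent of the lowest degree `k + δ` of `E` is a corner
with at least two successors in its own orthant, so `E` has at least twice as many exponents of
degree `k + δ + 1` as of degree `k + δ`. For large `k` this fails: degree `k + δ` of `E` contains a
translate of all `binom(k + n - 1, n - 1)` exponents of degree `k`, and
`binom(k + δ + n, n - 1) / binom(k + n - 1, n - 1) → 1`. -/

open Finset Finsupp Filter

section Orthants

variable {σ : Type*}

def orthant (c : σ →₀ ℕ) (Z : Set σ) : Set (σ →₀ ℕ) :=
  {e | ∃ s : σ →₀ ℕ, ↑s.support ⊆ Z ∧ c + s = e}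

lemma add_single_mem_orthant (c : σ →₀ ℕ) {Z : Set σ} {j : σ} (hj : j ∈ Z) :
    c + single j 1 ∈ orthant c Z :=
  ⟨single j 1, by simpa [support_single] using hj, rfl⟩

lemma eq_of_mem_orthant_of_degree_le {c e : σ →₀ ℕ} {Z : Set σ} (he : e ∈ orthant c Z)
    (hdeg : degree e ≤ degree c) : e = c := by
  obtain ⟨s, -, rfl⟩ := he
  have : degree s = 0 := by rw [map_add] at hdeg; omega
  rw [(degree_eq_zero_iff s).1 this, add_zero]

end Orthants

section OrthantPartition

variable {σ : Type*} {E : Set (σ →₀ ℕ)} {D : σ →₀ ℕ}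

noncomputable def orthantBase (E : Set (σ →₀ ℕ)) (D : σ →₀ ℕ) (z : σ) (e : σ →₀ ℕ) :
    σ →₀ ℕ :=
  (e ⊓ D).update z (sInf {a | (e ⊓ D).update z a ∈ E})

lemma inf_mem_orthantBase_set (hD : ∀ e ∈ E, e ⊓ D ∈ E) (z : σ) {e : σ →₀ ℕ} (he : e ∈ E) :
    (e ⊓ D) z ∈ {a | (e ⊓ D).update z a ∈ E} := by
  rw [Set.mem_ofPred_eq, update_self]
  exact hD e he

lemma orthantBase_mem (hD : ∀ e ∈ E, e ⊓ D ∈ E) (z : σ) {e : σ →₀ ℕ} (he : e ∈ E) :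
    orthantBase E D z e ∈ E :=
  Nat.sInf_mem ⟨_, inf_mem_orthantBase_set hD z he⟩

lemma orthantBase_le_inf (hD : ∀ e ∈ E, e ⊓ D ∈ E) (z : σ) {e : σ →₀ ℕ} (he : e ∈ E) :
    orthantBase E D z e ≤ e ⊓ D := by
  classical
  intro j
  rcases eq_or_ne j z with rfl | hj
  · simpa [orthantBase] using Nat.sInf_le (inf_mem_orthantBase_set hD j he)
  · simp [orthantBase, update_apply, hj]

variable [Fintype σ] [DecidableEq σ]

def orthantDirections (D : σ →₀ ℕ) (z : σ) (b : σ →₀ ℕ) : Finset σ :=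
  insert z ({j | b j = D j} : Finset σ)

variable (hD : ∀ e ∈ E, e ⊓ D ∈ E) (z : σ)
include hD

lemma mem_orthant_orthantBase {e : σ →₀ ℕ} (he : e ∈ E) :
    e ∈ orthant (orthantBase E D z e) (orthantDirections D z (orthantBase E D z e)) := by
  have hle := orthantBase_le_inf hD z he
  refine ⟨e - orthantBase E D z e, fun j hj => ?_, add_tsub_cancel_of_le (hle.trans inf_le_left)⟩
  rcases eq_or_ne j z with rfl | hjz
  · exact mem_insert_self _ _
  · have hj : orthantBase E D z e j < e j := by simpa [Nat.sub_eq_zero_iff_le] using hj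
    simp only [orthantDirections, coe_insert, coe_filter, Set.mem_insert_iff, hjz, false_or]
    simp only [orthantBase, update_apply, hjz, if_false, inf_apply] at hj ⊢
    grind

lemma orthantBase_eq_of_mem_orthant {e e' : σ →₀ ℕ} (he' : e' ∈ E)
    (he : e ∈ orthant (orthantBase E D z e') (orthantDirections D z (orthantBase E D z e'))) :
    orthantBase E D z e = orthantBase E D z e' := by
  obtain ⟨s, hs, rfl⟩ := he
  have hb := orthantBase_le_inf hD z he'
  have hupd : ∀ a, ((orthantBase E D z e' + s) ⊓ D).update z a = (e' ⊓ D).update z a := by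
    intro a
    ext j
    rcases eq_or_ne j z with rfl | hjz
    · simp
    have hbj : orthantBase E D z e' j = (e' ⊓ D) j := by simp [orthantBase, update_apply, hjz]
    have hbD : orthantBase E D z e' j ≤ D j := (hb j).trans inf_le_right
    simp only [update_apply, hjz, if_false, inf_apply, Finsupp.add_apply, ← hbj]
    by_cases hsj : s j = 0
    · simp [hsj, hbD]
    · have : j ∈ orthantDirections D z (orthantBase E D z e') := hs (by simpa using hsj)
      simp only [orthantDirections, mem_insert, mem_filter, mem_univ, true_and, hjz,
        false_or] at this
      grind
  conv_lhs => rw [orthantBase]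
  simp only [hupd]
  rfl

theorem exists_orthant_partition :
    ∃ (r : ℕ) (c : Fin r → σ →₀ ℕ) (Z : Fin r → Finset σ), (∀ i, z ∈ Z i) ∧ (∀ i, c i ∈ E) ∧
      ∀ e ∈ E, ∃! i, e ∈ orthant (c i) (Z i) := by
  have hB : (orthantBase E D z '' E).Finite := (Set.finite_Iic D).subset <| by
    rintro _ ⟨e, he, rfl⟩
    exact (orthantBase_le_inf hD z he).trans inf_le_right
  have := hB.to_subtype
  let q := (Finite.equivFin (orthantBase E D z '' E)).symm
  have hq : ∀ i, ∃ e ∈ E, orthantBase E D z e = q i := fun i => (q i).2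
  refine ⟨_, fun i => q i, fun i => orthantDirections D z (q i), fun i => mem_insert_self _ _,
    fun i => ?_, fun e he => ?_⟩
  · obtain ⟨e, he, h⟩ := hq i
    simpa only [← h] using orthantBase_mem hD z he
  · refine ⟨q.symm ⟨_, e, he, rfl⟩, ?_, fun j hj => q.eq_symm_apply.2 (Subtype.ext ?_)⟩
    · dsimp only
      rw [q.apply_symm_apply]
      exact mem_orthant_orthantBase hD z he
    · obtain ⟨e', he', h⟩ := hq j
      simp only [← h] at hj ⊢
      exact (orthantBase_eq_of_mem_orthant hD z he' hj).symm

end OrthantPartition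

section DegreeLayers

variable (σ : Type*) [Fintype σ] [DecidableEq σ]

def degreeLayer (d : ℕ) : Finset (σ →₀ ℕ) :=
  univ.finsuppAntidiag d

variable {σ}

@[simp]
lemma mem_degreeLayer {d : ℕ} {e : σ →₀ ℕ} : e ∈ degreeLayer σ d ↔ degree e = d := by
  simp [degreeLayer, degree_eq_sum]

lemma card_degreeLayer (d : ℕ) : #(degreeLayer σ d) = (Fintype.card σ).multichoose d :=
  card_finsuppAntidiag_nat_eq_multichoose d

theorem two_mul_card_degreeLayer_le {ι : Type*} [Fintype ι] {E : Set (σ →₀ ℕ)}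
    [DecidablePred (· ∈ E)] (hE : IsUpperSet E) {c : ι → σ →₀ ℕ} {Z : ι → Finset σ}
    (hc : ∀ i, c i ∈ E) (hpart : ∀ e ∈ E, ∃! i, e ∈ orthant (c i) (Z i))
    (hZ : ∀ i, 2 ≤ #(Z i)) {d : ℕ} (hd : ∀ e ∈ E, d ≤ degree e) :
    2 * #{e ∈ degreeLayer σ d | e ∈ E} ≤ #{e ∈ degreeLayer σ (d + 1) | e ∈ E} := by
  classical
  let T : Finset ι := {i | degree (c i) = d}
  have hbase : #{e ∈ degreeLayer σ d | e ∈ E} ≤ #T := by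
    refine (card_le_card fun e he => ?_).trans (card_image_le (f := c))
    obtain ⟨he, heE⟩ := mem_filter.1 he
    obtain ⟨i, hi, -⟩ := hpart e heE
    have hei := eq_of_mem_orthant_of_degree_le hi ((mem_degreeLayer.1 he).trans_le (hd _ (hc i)))
    exact mem_image.2 ⟨i, by simp [T, ← hei, mem_degreeLayer.1 he], hei.symm⟩
  have hsigma : 2 * #T ≤ #(T.sigma Z) := by
    rw [card_sigma, mul_comm]
    simpa using card_nsmul_le_sum T (fun i => #(Z i)) 2 fun i _ => hZ i
  have hstep : #(T.sigma Z) ≤ #{e ∈ degreeLayer σ (d + 1) | e ∈ E} := by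
    have hmem : ∀ x : Σ _ : ι, σ, c x.1 + single x.2 1 ∈ E := fun x =>
      hE le_self_add (hc x.1)
    refine card_le_card_of_injOn (fun x => c x.1 + single x.2 1) (fun x hx => ?_) ?_
    · obtain ⟨hi, hj⟩ := mem_sigma.1 hx
      simp only [coe_filter, Set.mem_ofPred_eq, mem_degreeLayer, map_add, degree_single]
      exact ⟨by simp only [T, mem_filter] at hi; omega, hmem x⟩
    · rintro ⟨i, j⟩ hx ⟨i', j'⟩ hx' h
      simp only at h
      have hi : i = i' := (hpart _ (hmem ⟨i, j⟩)).unique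
        (add_single_mem_orthant _ (mem_sigma.1 hx).2)
        (h ▸ add_single_mem_orthant _ (mem_sigma.1 hx').2)
      subst hi
      rw [single_left_injective one_ne_zero (add_left_cancel h)]
  omega

end DegreeLayers

section Asymptotics

theorem eventually_pow_add_lt_two_mul_pow (a m : ℕ) :
    ∀ᶠ k in atTop, (k + a) ^ m < 2 * (k + 1) ^ m := by
  have hlim : Tendsto (fun k : ℕ => (((a : ℝ) + 1 * k) / (1 + 1 * k)) ^ m) atTop (nhds 1) := by
    simpa using (tendsto_add_mul_div_add_mul_atTop_nhds (a : ℝ) 1 1 one_ne_zero).pow m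
  filter_upwards [hlim.eventually (gt_mem_nhds one_lt_two)] with k hk
  rw [div_pow, div_lt_iff₀ (by positivity), one_mul, add_comm (a : ℝ), add_comm (1 : ℝ)] at hk
  exact_mod_cast (by linarith : ((k : ℝ) + a) ^ m < 2 * ((k : ℝ) + 1) ^ m)

theorem eventually_multichoose_add_lt_two_mul {n : ℕ} (hn : 0 < n) (c : ℕ) :
    ∀ᶠ k in atTop, n.multichoose (k + c) < 2 * n.multichoose k := by
  obtain ⟨m, rfl⟩ : ∃ m, n = m + 1 := ⟨n - 1, by omega⟩
  have hfac : ∀ t, m.factorial * (m + 1).multichoose t = (t + m).descFactorial m := fun t => by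
    rw [Nat.descFactorial_eq_factorial_mul_choose, Nat.multichoose_eq,
      show m + 1 + t - 1 = t + m by omega, Nat.choose_symm_add]
  filter_upwards [eventually_pow_add_lt_two_mul_pow (c + m) m] with k hk
  refine lt_of_mul_lt_mul_left (a := m.factorial) ?_ (Nat.zero_le _)
  calc m.factorial * (m + 1).multichoose (k + c) ≤ (k + (c + m)) ^ m := by
        rw [hfac, ← add_assoc]; exact Nat.descFactorial_le_pow _ _
    _ < 2 * (k + 1) ^ m := hk
    _ ≤ m.factorial * (2 * (m + 1).multichoose k) := by
        rw [mul_left_comm, hfac]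
        gcongr
        simpa [show k + m + 1 - m = k + 1 by omega] using Nat.pow_sub_le_descFactorial (k + m) m

end Asymptotics

theorem exists_forall_inf_mem_upperClosure {σ : Type*} [Finite σ] (A : Set (σ →₀ ℕ)) :
    ∃ D : σ →₀ ℕ, ∀ e ∈ upperClosure A, e ⊓ D ∈ upperClosure A := by
  classical
  have hF : {a | Minimal (· ∈ A) a}.Finite :=
    WellQuasiOrderedLE.finite_of_isAntichain (setOfPred_minimal_antichain _)
  refine ⟨hF.toFinset.sup id, fun e he => ?_⟩
  obtain ⟨a, ha, hae⟩ := mem_upperClosure.1 he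
  obtain ⟨b, hba, hb⟩ := exists_minimal_le_of_wellFoundedLT (· ∈ A) a ha
  exact mem_upperClosure.2 ⟨b, hb.prop, le_inf (hba.trans hae)
    (Finset.le_sup (f := id) (hF.mem_toFinset.2 hb))⟩

theorem Module.Basis.isInternal_span_image_iff {ι κ R V : Type*} [Ring R] [Nontrivial R]
    [AddCommGroup V] [Module R V] [DecidableEq κ] (b : Module.Basis ι R V) (Q : κ → Set ι) :
    DirectSum.IsInternal (fun i => Submodule.span R (b '' Q i)) ↔ ∀ x, ∃! i, x ∈ Q i := by
  have hmem : ∀ x s, b x ∈ Submodule.span R (b '' s) ↔ x ∈ s := fun x s =>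
    ⟨fun h => by_contra fun hx => b.linearIndependent.notMem_span_image hx h,
      fun h => Submodule.subset_span (Set.mem_image_of_mem b h)⟩
  have hsup : ⨆ i, Submodule.span R (b '' Q i) = Submodule.span R (b '' ⋃ i, Q i) := by
    rw [Set.image_iUnion, Submodule.span_iUnion]
  rw [DirectSum.isInternal_submodule_iff_iSupIndep_and_iSup_eq_top, hsup]
  constructor
  · rintro ⟨hind, htop⟩ x
    obtain ⟨i, hi⟩ := Set.mem_iUnion.1 ((hmem x _).1 (htop ▸ Submodule.mem_top))
    refine ⟨i, hi, fun j hj => by_contra fun hji => b.ne_zero x ?_⟩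
    exact Submodule.disjoint_def.1 (hind.pairwiseDisjoint hji) _
      ((hmem x _).2 hj) ((hmem x _).2 hi)
  · intro h
    refine ⟨iSupIndep_def.2 fun i => ?_, ?_⟩
    · simp only [← Submodule.span_iUnion₂, ← Set.image_iUnion₂]
      refine b.linearIndependent.disjoint_span_image (Set.disjoint_left.2 fun x hi hx => ?_)
      obtain ⟨j, hji, hj⟩ := Set.mem_iUnion₂.1 hx
      exact hji ((h x).unique hj hi)
    · rw [Set.iUnion_eq_univ_iff.2 fun x => (h x).exists, Set.image_univ, b.span_eq]

lemma supported_eq_span_monomial_image {σ : Type*} (Z : Set σ) :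
    Subalgebra.toSubmodule (supported K Z) =
      Submodule.span K ((fun s => monomial s (1 : K)) '' {s | ↑s.support ⊆ Z}) := by
  rw [← restrictSupport_eq_span]
  ext p
  rw [Subalgebra.mem_toSubmodule, MvPolynomial.mem_supported, mem_restrictSupport_iff]
  simp only [Set.subset_def, Finset.mem_coe, mem_vars_iff_mem_support, Set.mem_ofPred_eq]
  exact ⟨fun h e he i hi => h i ⟨e, he, hi⟩, fun h i ⟨e, he, hi⟩ => h e he i hi⟩

section MonomialIdeal

variable {σ : Type*} {A : Set (σ →₀ ℕ)} {J : Ideal (MvPolynomial σ K)}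

lemma monomial_mem_span_monomial_image_iff {e : σ →₀ ℕ} :
    monomial e (1 : K) ∈ Ideal.span ((fun a => monomial a (1 : K)) '' A) ↔
      e ∈ upperClosure A := by
  classical
  simp [mem_ideal_span_monomial_image, support_monomial, mem_upperClosure]

variable (hJ : J = Ideal.span ((fun a => monomial a (1 : K)) '' A))
include hJ

noncomputable def monomialBasis : Module.Basis (upperClosure A) K J :=
  Module.Basis.mk (v := fun e => ⟨monomial e.1 1, hJ ▸ monomial_mem_span_monomial_image_iff.2 e.2⟩)
    (LinearIndependent.of_comp (J.subtype.restrictScalars K) <| by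
      simpa [Function.comp_def] using
        (basisMonomials σ K).linearIndependent.comp _ Subtype.val_injective)
    (by
      rintro ⟨p, hp⟩ -
      have hsupp : ∀ e ∈ p.support, e ∈ upperClosure A := fun e he => by
        simpa [mem_upperClosure] using mem_ideal_span_monomial_image.1 (hJ ▸ hp) e he
      have : (⟨p, hp⟩ : J) = ∑ e ∈ p.support.attach,
          coeff e.1 p • (⟨monomial e.1 1, hJ ▸ monomial_mem_span_monomial_image_iff.2
            (hsupp e.1 e.2)⟩ : J) := by
        ext1
        simp only [Submodule.coe_sum, Submodule.coe_smul_of_tower, smul_monomial, smul_eq_mul,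
          mul_one]
        conv_lhs => rw [p.as_sum]
        exact (sum_attach _ fun e => monomial e (coeff e p)).symm
      rw [this]
      exact Submodule.sum_mem _ fun e _ =>
        Submodule.smul_mem _ _ (Submodule.subset_span ⟨⟨e.1, hsupp e.1 e.2⟩, rfl⟩))

lemma monomialBasis_apply (e : upperClosure A) :
    monomialBasis hJ e = ⟨monomial e.1 1, hJ ▸ monomial_mem_span_monomial_image_iff.2 e.2⟩ :=
  Module.Basis.mk_apply ..

@[simp]
lemma coe_monomialBasis (e : upperClosure A) :
    (monomialBasis hJ e : MvPolynomial σ K) = monomial e.1 1 := by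
  rw [monomialBasis_apply]

end MonomialIdeal

section StanleySpaces

lemma stanleySpace_smul (m : M) (Z : Finset (Fin n)) {t : K} (ht : t ≠ 0) :
    stanleySpace (K := K) (t • m) Z = stanleySpace (K := K) m Z := by
  have : ((LinearMap.toSpanSingleton (MvPolynomial (Fin n) K) M (t • m)).restrictScalars K) =
      t • (LinearMap.toSpanSingleton (MvPolynomial (Fin n) K) M m).restrictScalars K := by
    ext p
    exact smul_comm _ t m
  rw [stanleySpace, this, Submodule.map_smul _ _ _ ht, stanleySpace]

variable {A : Set (Fin n →₀ ℕ)} {J : Ideal (MvPolynomial (Fin n) K)}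
  (hJ : J = Ideal.span ((fun a => monomial a (1 : K)) '' A))
include hJ

lemma stanleySpace_monomialBasis (c : upperClosure A) (Z : Finset (Fin n)) :
    stanleySpace (monomialBasis hJ c) Z =
      Submodule.span K (monomialBasis hJ '' {e | e.1 ∈ orthant c.1 Z}) := by
  rw [stanleySpace, supported_eq_span_monomial_image, Submodule.map_span, ← Set.image_comp]
  congr 1
  ext x
  constructor
  · rintro ⟨s, hs, rfl⟩
    refine ⟨⟨c.1 + s, (upperClosure A).upper le_self_add c.2⟩, ⟨s, hs, rfl⟩, Subtype.ext ?_⟩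
    simp [monomial_mul, add_comm]
  · rintro ⟨⟨e, he⟩, ⟨s, hs, rfl⟩, rfl⟩
    exact ⟨s, hs, Subtype.ext (by simp [monomial_mul, add_comm])⟩

theorem isInternal_stanleySpace_monomialBasis_iff {r : ℕ} (c : Fin r → upperClosure A)
    (Z : Fin r → Finset (Fin n)) :
    DirectSum.IsInternal (fun i => stanleySpace (K := K) (monomialBasis hJ (c i)) (Z i)) ↔
      ∀ e ∈ upperClosure A, ∃! i, e ∈ orthant (c i).1 (Z i) := by
  simp only [stanleySpace_monomialBasis, Module.Basis.isInternal_span_image_iff]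
  exact ⟨fun h e he => h ⟨e, he⟩, fun h e => h e.1 e.2⟩

variable (g : MultiGrading K n J)
  (hg : ∀ (c : Fin n →₀ ℕ) (hc : monomial c (1 : K) ∈ J),
    (⟨monomial c (1 : K), hc⟩ : J) ∈ g.deg (fun i => (c i : ℤ)))
include hg

theorem MultiGrading.exists_eq_smul_monomialBasis {a : Fin n → ℤ} {m : J} (hm : m ∈ g.deg a)
    (hm0 : m ≠ 0) : ∃ (e : upperClosure A) (t : K), t ≠ 0 ∧ m = t • monomialBasis hJ e := by
  let Q : (Fin n → ℤ) → Set (upperClosure A) := fun a => {e | (fun i => (e.1 i : ℤ)) = a}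
  have hint := ((monomialBasis hJ).isInternal_span_image_iff Q).2 fun e =>
    ⟨_, rfl, fun _ h => h.symm⟩
  have hle : (fun a => Submodule.span K (monomialBasis hJ '' Q a)) ≤ g.deg := fun a =>
    Submodule.span_le.2 <| by
      rintro _ ⟨e, rfl, rfl⟩
      rw [monomialBasis_apply]
      exact hg _ _
  have hdeg := (g.isInternal.submodule_iSupIndep.le_iff_eq_of_iSup_eq_top
    hint.submodule_iSup_eq_top).1 hle
  have hQ : (Q a).Subsingleton := fun e he e' he' =>
    Subtype.ext <| Finsupp.ext fun i => by exact_mod_cast congrFun (he.trans he'.symm) i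
  rw [← hdeg] at hm
  dsimp only at hm
  obtain hQa | ⟨e, hQa⟩ := hQ.eq_empty_or_singleton
  · simp only [hQa, Set.image_empty, Submodule.span_empty, Submodule.mem_bot] at hm
    exact absurd hm hm0
  · rw [hQa, Set.image_singleton, Submodule.mem_span_singleton] at hm
    obtain ⟨t, rfl⟩ := hm
    exact ⟨e, t, by rintro rfl; simp at hm0, rfl⟩

lemma StanleyDecomposition.exists_stanleySpace_eq_monomialBasis (D : StanleyDecomposition g)
    (i : Fin D.r) :
    ∃ e, stanleySpace (K := K) (D.elt i) (D.Z i) = stanleySpace (monomialBasis hJ e) (D.Z i) := by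
  obtain ⟨a, ha⟩ := D.homogeneous i
  have hne : D.elt i ≠ 0 := fun h =>
    one_ne_zero (D.free i 1 (Subalgebra.one_mem _) (by rw [h, smul_zero]))
  obtain ⟨e, t, ht, he⟩ := g.exists_eq_smul_monomialBasis hJ hg ha hne
  exact ⟨e, he ▸ stanleySpace_smul _ _ ht⟩

end StanleySpaces

section StanleyDepth

variable {A : Set (Fin n →₀ ℕ)} {J : Ideal (MvPolynomial (Fin n) K)}
  (hJ : J = Ideal.span ((fun a => monomial a (1 : K)) '' A)) (g : MultiGrading K n J)
  (hg : ∀ (c : Fin n →₀ ℕ) (hc : monomial c (1 : K) ∈ J),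
    (⟨monomial c (1 : K), hc⟩ : J) ∈ g.deg (fun i => (c i : ℤ)))
include hJ hg

theorem one_le_stanleyDepth (hn : 0 < n) : 1 ≤ stanleyDepth g := by
  obtain ⟨D, hD⟩ := exists_forall_inf_mem_upperClosure A
  obtain ⟨r, c, Z, hz, hc, hpart⟩ := exists_orthant_partition hD ⟨0, hn⟩
  let b := monomialBasis hJ
  let S : StanleyDecomposition g :=
    { r := r
      elt := fun i => b ⟨c i, hc i⟩
      Z := Z
      homogeneous := fun i => ⟨_, monomialBasis_apply hJ _ ▸ hg _ _⟩
      free := fun i p _ hp => by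
        simpa only [Submodule.coe_smul, smul_eq_mul, coe_monomialBasis, ZeroMemClass.coe_zero,
          mul_eq_zero, monomial_eq_zero, one_ne_zero, or_false, b] using congrArg Subtype.val hp
      isInternal := (isInternal_stanleySpace_monomialBasis_iff hJ _ Z).2 hpart }
  exact le_iSup_of_le S (le_iInf fun i => by exact_mod_cast (Finset.card_pos.2 ⟨_, hz i⟩))

theorem stanleyDepth_le_one [DecidablePred (· ∈ upperClosure A)] {d : ℕ}
    (hd : ∀ e ∈ upperClosure A, d ≤ degree e)
    (hcard : #{e ∈ degreeLayer (Fin n) (d + 1) | e ∈ upperClosure A} <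
      2 * #{e ∈ degreeLayer (Fin n) d | e ∈ upperClosure A}) :
    stanleyDepth g ≤ 1 := by
  refine iSup_le fun D => ?_
  suffices ∃ i, #(D.Z i) ≤ 1 by
    obtain ⟨i, hi⟩ := this
    exact iInf_le_of_le i (by exact_mod_cast hi)
  by_contra! hZ
  choose c hc using D.exists_stanleySpace_eq_monomialBasis hJ g hg
  have hpart := (isInternal_stanleySpace_monomialBasis_iff hJ c D.Z).1 <| by
    simpa only [← hc] using D.isInternal
  exact hcard.not_ge <| two_mul_card_degreeLayer_le (upperClosure A).upper (fun i => (c i).2)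
    hpart hZ hd

end StanleyDepth

section PowersOfMaxIdeal

open scoped Pointwise

lemma span_monomial_image_mul_span_monomial_image {σ : Type*} (A B : Set (σ →₀ ℕ)) :
    Ideal.span ((fun a => monomial a (1 : K)) '' A) *
        Ideal.span ((fun b => monomial b (1 : K)) '' B) =
      Ideal.span ((fun c => monomial c (1 : K)) '' (A + B)) := by
  rw [Ideal.span_mul_span']
  congr 1
  ext p
  simp only [Set.mem_mul, Set.mem_add, Set.mem_image]
  constructor
  · rintro ⟨_, ⟨a, ha, rfl⟩, _, ⟨b, hb, rfl⟩, rfl⟩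
    exact ⟨a + b, ⟨a, ha, b, hb, rfl⟩, by simp [monomial_mul]⟩
  · rintro ⟨_, ⟨a, ha, b, hb, rfl⟩, rfl⟩
    exact ⟨_, ⟨a, ha, rfl⟩, _, ⟨b, hb, rfl⟩, by simp [monomial_mul]⟩

lemma maxIdeal_pow_mul_span_monomial_image (k : ℕ) (G : Set (Fin n →₀ ℕ)) :
    maxIdeal K n ^ k * Ideal.span ((fun c => monomial c (1 : K)) '' G) =
      Ideal.span ((fun c => monomial c (1 : K)) '' (degree ⁻¹' {k} + G)) := by
  rw [show maxIdeal K n = idealOfVars (Fin n) K from rfl, pow_idealOfVars_eq_span,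
    span_monomial_image_mul_span_monomial_image]

variable {σ : Type*} {G : Set (σ →₀ ℕ)} {γ : σ →₀ ℕ} {k : ℕ}

lemma le_degree_of_mem_upperClosure (hγ : ∀ γ' ∈ G, degree γ ≤ degree γ') {e : σ →₀ ℕ}
    (he : e ∈ upperClosure (degree ⁻¹' {k} + G)) : k + degree γ ≤ degree e := by
  obtain ⟨_, ⟨c, hc, γ', hγ', rfl⟩, hle⟩ := mem_upperClosure.1 he
  have := degree_mono hle
  simp only [Set.mem_preimage, Set.mem_singleton_iff] at hc
  simp only [map_add, hc] at this
  linarith [hγ γ' hγ']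

lemma card_degreeLayer_le_card_filter_upperClosure [Fintype σ] [DecidableEq σ]
    [DecidablePred (· ∈ upperClosure (degree ⁻¹' {k} + G))] (hγ : γ ∈ G) :
    #(degreeLayer σ k) ≤
      #{e ∈ degreeLayer σ (k + degree γ) | e ∈ upperClosure (degree ⁻¹' {k} + G)} := by
  refine card_le_card_of_injOn (γ + ·) (fun c hc => ?_) (add_right_injective γ).injOn
  have hc : degree c = k := mem_degreeLayer.1 hc
  simp only [coe_filter, mem_degreeLayer, map_add, Set.mem_ofPred_eq]
  exact ⟨by omega, mem_upperClosure.2 ⟨c + γ, Set.add_mem_add hc hγ, (add_comm c γ).le⟩⟩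

end PowersOfMaxIdeal

/-- Let `I ⊆ S = K[x₁,…,xₙ]` be a (nonzero) monomial ideal and
`𝔪 = (x₁,…,xₙ)`.  Then `sdepth (𝔪^k I) = 1` for all sufficiently large `k`
(where `𝔪^k I` carries its natural multigrading, in which every monomial of
`𝔪^k I` is homogeneous of its own multidegree). -/
theorem sdepth_maxIdeal_pow_mul_eq_one {K : Type*} [Field K] {n : ℕ} (hn : 0 < n)
    (I : Ideal (MvPolynomial (Fin n) K))
    (hmono : ∃ G : Set (Fin n →₀ ℕ), I = Ideal.span ((fun c => monomial c (1 : K)) '' G))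
    (hI : I ≠ ⊥) :
    ∃ N : ℕ, ∀ k : ℕ, N ≤ k →
      ∀ g : MultiGrading K n ↥(maxIdeal K n ^ k * I),
        (∀ (c : Fin n →₀ ℕ) (hc : monomial c (1 : K) ∈ maxIdeal K n ^ k * I),
          (⟨monomial c (1 : K), hc⟩ : ↥(maxIdeal K n ^ k * I)) ∈ g.deg (fun i => (c i : ℤ))) →
        stanleyDepth g = 1 := by
  classical
  obtain ⟨G, rfl⟩ := hmono
  have hG : G.Nonempty := Set.nonempty_iff_ne_empty.2 fun h => hI (by simp [h])
  set γ := Function.argminOn degree G hG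
  have hγ : γ ∈ G := Function.argminOn_mem degree G hG
  obtain ⟨N, hN⟩ := eventually_atTop.1 (eventually_multichoose_add_lt_two_mul hn (degree γ + 1))
  refine ⟨N, fun k hk g hg => le_antisymm ?_
    (one_le_stanleyDepth (maxIdeal_pow_mul_span_monomial_image k G) g hg hn)⟩
  refine stanleyDepth_le_one (maxIdeal_pow_mul_span_monomial_image k G) g hg
    (fun e => le_degree_of_mem_upperClosure (γ := γ) fun γ' => Function.argminOn_le degree G) ?_
  calc _ ≤ #(degreeLayer (Fin n) (k + degree γ + 1)) := card_filter_le _ _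
    _ = n.multichoose (k + (degree γ + 1)) := by rw [card_degreeLayer, Fintype.card_fin, add_assoc]
    _ < 2 * n.multichoose k := hN k hk
    _ = 2 * #(degreeLayer (Fin n) k) := by rw [card_degreeLayer, Fintype.card_fin]
    _ ≤ _ := by grw [card_degreeLayer_le_card_filter_upperClosure hγ]
end
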